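/- arXiv:math/0607812 — 10 statements merged into one kernel-verified Lean document; each statement's English description precedes it below -/
import Mathlib

section
/- Suppose λ, λ′ ∈ [0, 1/2), μ₁ ≠ μ₂ and μ₁′ ≠ μ₂′ are real numbers, and F, F′ are cumulative distribution functions of symmetric distributions, such that λF(x−μ₁) + (1−λ)F(x−μ₂) = λ′F′(x−μ₁′) + (1−λ′)F′(x−μ₂′) for all x ∈ ℝ. Then λ = λ′, μ₂ = μ₂′ and F = F′; moreover, if λ > 0 then also μ₁ = μ₁′. (Identifiability of the two-component shifted symmetric mixture model.) -/
/-! Pass to characteristic functions. The mixture has characteristic function `φ_ν(t) M(t)`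
with `M(t) = λ e^{itμ₁} + (1 - λ) e^{itμ₂}`, and `φ_ν` is real by symmetry and nonzero near `0`.
Hence `M(t) conj M'(t)` is real near `0`: the four-point law of the difference of the two mixing
laws has a sine transform vanishing near `0`, so all its odd moments vanish. For a four-point law
this forces the extreme points to be `±x` with equal weights, and with `λ, λ' < 1/2` that pins
down the parameters. Finally `M` has no zeros because `λ < 1/2`, so `φ_ν = φ_ν'` and `ν = ν'`. -/

open MeasureTheory

def IsSymmCDF (F : ℝ → ℝ) : Prop :=
  ∃ ν : Measure ℝ, IsProbabilityMeasure ν ∧ ν.map (fun x => -x) = ν ∧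
    ∀ x : ℝ, F x = (ν (Set.Iic x)).toReal

open Filter Topology

theorem eventually_eq_zero_of_hasDerivAt {f f' : ℝ → ℝ} {x₀ : ℝ}
    (hf : ∀ t, HasDerivAt f (f' t) t) (h : ∀ᶠ t in 𝓝 x₀, f t = 0) :
    ∀ᶠ t in 𝓝 x₀, f' t = 0 := by
  have hderiv : deriv f =ᶠ[𝓝 x₀] deriv (fun _ => (0 : ℝ)) := Filter.EventuallyEq.deriv h
  filter_upwards [hderiv] with t ht
  simpa [(hf t).deriv] using ht

section SineSums

open Real

variable {ι : Type*} (s : Finset ι) (x : ι → ℝ)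

theorem hasDerivAt_sum_mul_sin (w : ι → ℝ) (t : ℝ) :
    HasDerivAt (fun t => ∑ i ∈ s, w i * sin (x i * t)) (∑ i ∈ s, w i * x i * cos (x i * t)) t :=
  HasDerivAt.fun_sum fun i _ => by
    simpa [mul_assoc, mul_comm (x i)] using ((hasDerivAt_mul_const (x i)).sin).const_mul (w i)

theorem hasDerivAt_sum_mul_cos (w : ι → ℝ) (t : ℝ) :
    HasDerivAt (fun t => ∑ i ∈ s, w i * cos (x i * t))
      (-∑ i ∈ s, w i * x i * sin (x i * t)) t := by
  rw [← Finset.sum_neg_distrib]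
  exact HasDerivAt.fun_sum fun i _ => by
    simpa [mul_assoc, mul_comm (x i)] using ((hasDerivAt_mul_const (x i)).cos).const_mul (w i)

theorem sum_mul_pow_eq_zero_of_eventually_sum_mul_sin {w : ι → ℝ}
    (h : ∀ᶠ t in 𝓝 0, ∑ i ∈ s, w i * sin (x i * t) = 0) (k : ℕ) :
    ∑ i ∈ s, w i * x i ^ (2 * k + 1) = 0 := by
  have hsin (k : ℕ) : ∀ᶠ t in 𝓝 0, ∑ i ∈ s, w i * x i ^ (2 * k) * sin (x i * t) = 0 := by
    induction k with
    | zero => simpa using h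
    | succ k ih =>
      have hcos := eventually_eq_zero_of_hasDerivAt (hasDerivAt_sum_mul_sin s x _) ih
      filter_upwards [eventually_eq_zero_of_hasDerivAt (hasDerivAt_sum_mul_cos s x _) hcos]
        with t ht
      rw [neg_eq_zero] at ht
      rw [← ht]
      congr 1 with i
      ring
  have := (eventually_eq_zero_of_hasDerivAt (hasDerivAt_sum_mul_sin s x _) (hsin k)).self_of_nhds
  simpa [pow_succ, mul_assoc] using this

end SineSums

open Complex ComplexConjugate BoundedContinuousFunction

section CharFun

variable {E : Type*} [MeasurableSpace E] [NormedAddCommGroup E] [InnerProductSpace ℝ E]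
  {μ ν : Measure E}

theorem charFun_add_measure [OpensMeasurableSpace E] [IsFiniteMeasure μ] [IsFiniteMeasure ν]
    (t : E) :
    charFun (μ + ν) t = charFun μ t + charFun ν t := by
  simp only [charFun_eq_integral_innerProbChar]
  exact integral_add_measure ((innerProbChar t).integrable μ) ((innerProbChar t).integrable ν)

theorem charFun_smul_measure (c : NNReal) (t : E) : charFun (c • μ) t = c * charFun μ t := by
  simp [charFun_apply, integral_smul_nnreal_measure, NNReal.smul_def]

end CharFun

theorem conj_charFun_of_map_neg {ν : Measure ℝ} (hν : ν.map (fun x => -x) = ν) (t : ℝ) :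
    conj (charFun ν t) = charFun ν t := by
  rw [← charFun_neg, ← neg_one_mul, ← charFun_map_mul]
  simp [hν]

noncomputable def shiftMixture (ν : Measure ℝ) (p a b : ℝ) : Measure ℝ :=
  p.toNNReal • ν.map (· + a) + (1 - p).toNNReal • ν.map (· + b)

noncomputable def twoPointCharFun (p a b t : ℝ) : ℂ :=
  p * cexp (t * a * I) + (1 - p) * cexp (t * b * I)

section ShiftMixture

variable {ν : Measure ℝ} [IsFiniteMeasure ν] {p a b : ℝ}

instance : IsFiniteMeasure (shiftMixture ν p a b) := by
  unfold shiftMixture; infer_instance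

theorem shiftMixture_real_Iic (hp : p ∈ Set.Icc (0 : ℝ) 1) (x : ℝ) :
    (shiftMixture ν p a b).real (Set.Iic x)
      = p * ν.real (Set.Iic (x - a)) + (1 - p) * ν.real (Set.Iic (x - b)) := by
  have hmap (c : ℝ) : (ν.map (· + c)).real (Set.Iic x) = ν.real (Set.Iic (x - c)) := by
    rw [map_measureReal_apply (measurable_add_const c) measurableSet_Iic]
    congr 1
    ext y
    simp [le_sub_iff_add_le]
  rw [shiftMixture, measureReal_add_apply, measureReal_nnreal_smul_apply,
    measureReal_nnreal_smul_apply, hmap, hmap,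
    Real.coe_toNNReal _ hp.1, Real.coe_toNNReal _ (sub_nonneg.mpr hp.2)]

theorem charFun_shiftMixture (hp : p ∈ Set.Icc (0 : ℝ) 1) (t : ℝ) :
    charFun (shiftMixture ν p a b) t = charFun ν t * twoPointCharFun p a b t := by
  simp only [shiftMixture, charFun_add_measure, charFun_smul_measure, charFun_map_add_const,
    twoPointCharFun, Real.coe_toNNReal _ hp.1, Real.coe_toNNReal _ (sub_nonneg.mpr hp.2)]
  simp only [RCLike.inner_apply, conj_trivial, ofReal_mul, ofReal_sub, ofReal_one]
  ring

end ShiftMixture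

theorem im_twoPointCharFun_mul_conj (p a b q a' b' t : ℝ) :
    (twoPointCharFun p a b t * conj (twoPointCharFun q a' b' t)).im
      = p * q * Real.sin ((a - a') * t) + p * (1 - q) * Real.sin ((a - b') * t)
        + (1 - p) * q * Real.sin ((b - a') * t) + (1 - p) * (1 - q) * Real.sin ((b - b') * t) := by
  have hexp (c c' : ℝ) :
      cexp (t * c * I) * conj (cexp (t * c' * I)) = cexp (↑((c - c') * t) * I) := by
    rw [← exp_conj, ← Complex.exp_add]
    congr 1
    simp only [map_mul, conj_ofReal, conj_I, ofReal_mul, ofReal_sub]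
    ring
  have hexpand : twoPointCharFun p a b t * conj (twoPointCharFun q a' b' t)
      = ↑(p * q) * (cexp (t * a * I) * conj (cexp (t * a' * I)))
        + ↑(p * (1 - q)) * (cexp (t * a * I) * conj (cexp (t * b' * I)))
        + ↑((1 - p) * q) * (cexp (t * b * I) * conj (cexp (t * a' * I)))
        + ↑((1 - p) * (1 - q)) * (cexp (t * b * I) * conj (cexp (t * b' * I))) := by
    simp only [twoPointCharFun, map_add, map_mul, map_sub, map_one, conj_ofReal]
    push_cast
    ring
  rw [hexpand, hexp, hexp, hexp, hexp]
  simp only [add_im, im_ofReal_mul, exp_ofReal_mul_I_im]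

theorem twoPointCharFun_ne_zero {p : ℝ} (hp : p < 1 / 2) (a b t : ℝ) :
    twoPointCharFun p a b t ≠ 0 := by
  intro h
  have := congrArg norm (eq_neg_of_add_eq_zero_left h)
  simp only [norm_neg, norm_mul, norm_exp_ofReal_mul_I, ← ofReal_mul, ← ofReal_one,
    ← ofReal_sub, norm_real, Real.norm_eq_abs, mul_one] at this
  rcases abs_eq_abs.mp this with h | h <;> linarith

theorem im_mul_conj_eq_zero {ψ ψ' z z' : ℂ} (hψ : conj ψ = ψ) (hψ' : conj ψ' = ψ') (hψ0 : ψ ≠ 0)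
    (h : ψ * z = ψ' * z') : (z * conj z').im = 0 := by
  obtain ⟨r, rfl⟩ := conj_eq_iff_real.mp hψ
  obtain ⟨r', rfl⟩ := conj_eq_iff_real.mp hψ'
  have : (r * (z * conj z')).im = (r' * ((normSq z' : ℝ) : ℂ)).im := by
    rw [← mul_assoc, h, mul_assoc, mul_conj]
  simp only [im_ofReal_mul, ← ofReal_mul, ofReal_im] at this
  exact (mul_eq_zero.mp this).resolve_left (by exact_mod_cast hψ0)

section Identifiability

variable {ν ν' : Measure ℝ} {p q a b a' b' : ℝ}

theorem eventually_sum_sin_eq_zero_of_shiftMixture_eq [IsProbabilityMeasure ν]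
    [IsFiniteMeasure ν'] (hν : ν.map (fun x => -x) = ν) (hν' : ν'.map (fun x => -x) = ν')
    (hp : p ∈ Set.Icc (0 : ℝ) 1) (hq : q ∈ Set.Icc (0 : ℝ) 1)
    (h : shiftMixture ν p a b = shiftMixture ν' q a' b') :
    ∀ᶠ t in 𝓝 0, p * q * Real.sin ((a - a') * t) + p * (1 - q) * Real.sin ((a - b') * t)
      + (1 - p) * q * Real.sin ((b - a') * t)
      + (1 - p) * (1 - q) * Real.sin ((b - b') * t) = 0 := by
  have hψ : ∀ᶠ t in 𝓝 0, charFun ν t ≠ 0 :=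
    continuous_charFun.continuousAt.eventually_ne (by simp)
  filter_upwards [hψ] with t hψt
  rw [← im_twoPointCharFun_mul_conj]
  refine im_mul_conj_eq_zero (conj_charFun_of_map_neg hν t) (conj_charFun_of_map_neg hν' t)
    hψt ?_
  rw [← charFun_shiftMixture hp, h, charFun_shiftMixture hq]

theorem oddMoments_eq_zero_of_shiftMixture_eq [IsProbabilityMeasure ν] [IsFiniteMeasure ν']
    (hν : ν.map (fun x => -x) = ν) (hν' : ν'.map (fun x => -x) = ν')
    (hp : p ∈ Set.Icc (0 : ℝ) 1) (hq : q ∈ Set.Icc (0 : ℝ) 1)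
    (h : shiftMixture ν p a b = shiftMixture ν' q a' b') (k : ℕ) :
    p * q * (a - a') ^ (2 * k + 1) + p * (1 - q) * (a - b') ^ (2 * k + 1)
      + (1 - p) * q * (b - a') ^ (2 * k + 1) + (1 - p) * (1 - q) * (b - b') ^ (2 * k + 1) = 0 := by
  have := sum_mul_pow_eq_zero_of_eventually_sum_mul_sin Finset.univ
    ![a - a', a - b', b - a', b - b'] (w := ![p * q, p * (1 - q), (1 - p) * q, (1 - p) * (1 - q)])
    (by simpa [Fin.sum_univ_four, add_assoc] using
      eventually_sum_sin_eq_zero_of_shiftMixture_eq hν hν' hp hq h) k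
  simpa [Fin.sum_univ_four, add_assoc] using this

theorem eq_of_shiftMixture_eq [IsFiniteMeasure ν] [IsFiniteMeasure ν']
    (hp : p ∈ Set.Ico (0 : ℝ) (1 / 2)) (ha : 0 < p → a = a')
    (h : shiftMixture ν p a b = shiftMixture ν' p a' b) : ν = ν' := by
  have hM : twoPointCharFun p a' b = twoPointCharFun p a b := by
    rcases hp.1.eq_or_lt with rfl | hpos
    · ext t
      simp [twoPointCharFun]
    · rw [ha hpos]
  refine Measure.ext_of_charFun (funext fun t => mul_right_cancel₀
    (twoPointCharFun_ne_zero hp.2 a b t) ?_)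
  have hIcc : p ∈ Set.Icc (0 : ℝ) 1 := ⟨hp.1, by linarith [hp.2]⟩
  rw [← charFun_shiftMixture hIcc, h, charFun_shiftMixture hIcc, hM]

end Identifiability

section OddMoments

variable {a b c d x y z u : ℝ}

theorem weight_eq_zero_of_sq_lt (hy : y ^ 2 < x ^ 2) (hz : z ^ 2 < x ^ 2) (hu : u ^ 2 < x ^ 2)
    (h : ∀ k : ℕ, a * x ^ (2 * k + 1) + b * y ^ (2 * k + 1) + c * z ^ (2 * k + 1)
      + d * u ^ (2 * k + 1) = 0) :
    a = 0 := by
  have hx : x ≠ 0 := by rintro rfl; nlinarith [sq_nonneg y]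
  have key : a * (x * ((x ^ 2 - y ^ 2) * (x ^ 2 - z ^ 2) * (x ^ 2 - u ^ 2))) = 0 := by
    linear_combination h 3 - (y ^ 2 + z ^ 2 + u ^ 2) * h 2
      + (y ^ 2 * z ^ 2 + y ^ 2 * u ^ 2 + z ^ 2 * u ^ 2) * h 1 - y ^ 2 * z ^ 2 * u ^ 2 * h 0
  refine (mul_eq_zero.mp key).resolve_right ?_
  have : 0 < (x ^ 2 - y ^ 2) * (x ^ 2 - z ^ 2) * (x ^ 2 - u ^ 2) := by
    apply mul_pos (mul_pos _ _) _ <;> linarith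
  exact mul_ne_zero hx this.ne'

theorem weight_eq_of_neg_eq (hy : y ^ 2 < x ^ 2) (hu : u ^ 2 < x ^ 2)
    (h : ∀ k : ℕ, a * x ^ (2 * k + 1) + b * y ^ (2 * k + 1) + c * (-x) ^ (2 * k + 1)
      + d * u ^ (2 * k + 1) = 0) :
    a = c := by
  have hx : x ≠ 0 := by rintro rfl; nlinarith [sq_nonneg y]
  have key : (a - c) * (x * ((x ^ 2 - y ^ 2) * (x ^ 2 - u ^ 2))) = 0 := by
    linear_combination h 2 - (y ^ 2 + u ^ 2) * h 1 + y ^ 2 * u ^ 2 * h 0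
  have : 0 < (x ^ 2 - y ^ 2) * (x ^ 2 - u ^ 2) := by apply mul_pos <;> linarith
  exact sub_eq_zero.mp ((mul_eq_zero.mp key).resolve_right (mul_ne_zero hx this.ne'))

theorem eq_zero_of_two_point (hb : 0 < b) (hd : 0 < d) (hbd : b ≠ d)
    (h : ∀ k : ℕ, b * y ^ (2 * k + 1) + d * u ^ (2 * k + 1) = 0) :
    y = 0 ∧ u = 0 := by
  have h1 := h 0
  have h3 := h 1
  norm_num at h1 h3
  have hy : b * (y * ((y - u) * (y + u))) = 0 := by linear_combination h3 - u ^ 2 * h1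
  rcases mul_eq_zero.mp ((mul_eq_zero.mp hy).resolve_left hb.ne') with rfl | hyu
  · exact ⟨rfl, by simpa [hd.ne'] using h1⟩
  rcases mul_eq_zero.mp hyu with hyu | hyu
  · have : (b + d) * y = 0 := by linear_combination h1 + d * hyu
    have hy0 := (mul_eq_zero.mp this).resolve_left (by positivity)
    exact ⟨hy0, by linarith⟩
  · have : (b - d) * y = 0 := by linear_combination h1 - d * hyu
    have hy0 := (mul_eq_zero.mp this).resolve_left (sub_ne_zero.mpr hbd)
    exact ⟨hy0, by linarith⟩

theorem neg_eq_of_extremes (ha : 0 < a) (hc : 0 < c) (hzy : z < y) (hyx : y < x)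
    (hzu : z < u) (hux : u < x)
    (h : ∀ k : ℕ, a * x ^ (2 * k + 1) + b * y ^ (2 * k + 1) + c * z ^ (2 * k + 1)
      + d * u ^ (2 * k + 1) = 0) :
    z = -x ∧ a = c ∧ ∀ k : ℕ, b * y ^ (2 * k + 1) + d * u ^ (2 * k + 1) = 0 := by
  rcases lt_trichotomy (-z) x with hlt | heq | hgt
  · exact absurd (weight_eq_zero_of_sq_lt (by nlinarith) (by nlinarith) (by nlinarith) h) ha.ne'
  · obtain rfl : z = -x := by linarith
    obtain rfl := weight_eq_of_neg_eq (by nlinarith) (by nlinarith) h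
    refine ⟨rfl, rfl, fun k => ?_⟩
    linear_combination h k - a * (Odd.neg_pow (odd_two_mul_add_one k) x)
  · refine absurd (weight_eq_zero_of_sq_lt (x := z) (y := y) (z := x) (u := u) (b := b) (c := a)
      (d := d) (by nlinarith) (by nlinarith) (by nlinarith) fun k => ?_) hc.ne'
    linear_combination h k

theorem mixture_params_eq_of_oddMoments {p q μ₁ μ₂ μ₁' μ₂' : ℝ}
    (hp : p ∈ Set.Ico (0 : ℝ) (1 / 2)) (hq : q ∈ Set.Ico (0 : ℝ) (1 / 2))
    (hμ : μ₁ ≠ μ₂) (hμ' : μ₁' ≠ μ₂')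
    (h : ∀ k : ℕ, p * q * (μ₁ - μ₁') ^ (2 * k + 1) + p * (1 - q) * (μ₁ - μ₂') ^ (2 * k + 1)
      + (1 - p) * q * (μ₂ - μ₁') ^ (2 * k + 1)
      + (1 - p) * (1 - q) * (μ₂ - μ₂') ^ (2 * k + 1) = 0) :
    p = q ∧ μ₂ = μ₂' ∧ (0 < p → μ₁ = μ₁') := by
  obtain ⟨hp0, hp⟩ := hp
  obtain ⟨hq0, hq⟩ := hq
  wlog hμlt : μ₂ < μ₁ generalizing μ₁ μ₂ μ₁' μ₂'
  · have hodd (k : ℕ) (x y : ℝ) : (-x - -y) ^ (2 * k + 1) = -(x - y) ^ (2 * k + 1) := by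
      rw [neg_sub_neg, ← neg_sub, (odd_two_mul_add_one k).neg_pow]
    obtain ⟨hpq, h₂, h₁⟩ := this (μ₁ := -μ₁) (μ₂ := -μ₂) (μ₁' := -μ₁') (μ₂' := -μ₂')
      (neg_injective.ne hμ) (neg_injective.ne hμ')
      (fun k => by simp only [hodd]; linear_combination -h k)
      (neg_lt_neg (lt_of_le_of_ne (not_lt.mp hμlt) hμ))
    exact ⟨hpq, neg_inj.mp h₂, fun hp => neg_inj.mp (h₁ hp)⟩
  rcases hp0.eq_or_lt with rfl | hp0 <;> rcases hq0.eq_or_lt with rfl | hq0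
  · have := h 0
    norm_num at this
    exact ⟨rfl, by linarith, fun h => absurd h (lt_irrefl 0)⟩
  · obtain ⟨h₁, h₂⟩ := eq_zero_of_two_point (b := q) (d := 1 - q) (y := μ₂ - μ₁') (u := μ₂ - μ₂')
      hq0 (by linarith) (by intro h; linarith) (fun k => by linear_combination h k)
    exact absurd (by linarith) hμ'
  · obtain ⟨h₁, h₂⟩ := eq_zero_of_two_point (b := p) (d := 1 - p) (y := μ₁ - μ₂') (u := μ₂ - μ₂')
      hp0 (by linarith) (by intro h; linarith) (fun k => by linear_combination h k)
    exact absurd (by linarith) hμ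
  rcases lt_or_gt_of_ne hμ' with hμ'lt | hμ'lt
  -- the extreme points `μ₁ - μ₁'` and `μ₂ - μ₂'` would need equal weights `p q = (1 - p) (1 - q)`
  · obtain ⟨-, hw, -⟩ := neg_eq_of_extremes (a := p * q) (c := (1 - p) * (1 - q))
      (x := μ₁ - μ₁') (y := μ₁ - μ₂') (z := μ₂ - μ₂') (u := μ₂ - μ₁') (b := p * (1 - q))
      (d := (1 - p) * q) (by positivity) (by nlinarith) (by linarith) (by linarith)
      (by linarith) (by linarith) (fun k => by linear_combination h k)
    nlinarith
  · obtain ⟨-, hw, hrest⟩ := neg_eq_of_extremes (a := p * (1 - q)) (c := (1 - p) * q)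
      (x := μ₁ - μ₂') (y := μ₁ - μ₁') (z := μ₂ - μ₁') (u := μ₂ - μ₂') (b := p * q)
      (d := (1 - p) * (1 - q)) (by nlinarith) (by nlinarith) (by linarith) (by linarith)
      (by linarith) (by linarith) (fun k => by linear_combination h k)
    have hpq : p = q := by linarith
    subst hpq
    obtain ⟨h₁, h₂⟩ := eq_zero_of_two_point (by positivity) (by nlinarith) (by nlinarith) hrest
    exact ⟨rfl, by linarith, fun _ => by linarith⟩

end OddMoments

/-- Identifiability of the two-component shifted symmetric mixture model. -/
theorem stmt_0 (lam lam' mu₁ mu₂ mu₁' mu₂' : ℝ) (F F' : ℝ → ℝ)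
    (hlam : lam ∈ Set.Ico (0 : ℝ) (1 / 2)) (hlam' : lam' ∈ Set.Ico (0 : ℝ) (1 / 2))
    (hmu : mu₁ ≠ mu₂) (hmu' : mu₁' ≠ mu₂')
    (hF : IsSymmCDF F) (hF' : IsSymmCDF F')
    (heq : ∀ x : ℝ, lam * F (x - mu₁) + (1 - lam) * F (x - mu₂)
      = lam' * F' (x - mu₁') + (1 - lam') * F' (x - mu₂')) :
    lam = lam' ∧ mu₂ = mu₂' ∧ F = F' ∧ (0 < lam → mu₁ = mu₁') := by
  obtain ⟨ν, _, hν, hνF⟩ := hF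
  obtain ⟨ν', _, hν', hν'F⟩ := hF'
  have hIcc {p : ℝ} (hp : p ∈ Set.Ico (0 : ℝ) (1 / 2)) : p ∈ Set.Icc (0 : ℝ) 1 :=
    ⟨hp.1, by linarith [hp.2]⟩
  have hmix : shiftMixture ν lam mu₁ mu₂ = shiftMixture ν' lam' mu₁' mu₂' := by
    refine Measure.ext_of_Iic _ _ fun x => ?_
    rw [← ENNReal.toReal_eq_toReal_iff' (measure_ne_top _ _) (measure_ne_top _ _),
      ← measureReal_def, ← measureReal_def, shiftMixture_real_Iic (hIcc hlam),
      shiftMixture_real_Iic (hIcc hlam')]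
    simpa only [hνF, hν'F, measureReal_def] using heq x
  obtain ⟨rfl, rfl, hmu₁⟩ := mixture_params_eq_of_oddMoments hlam hlam' hmu hmu'
    (oddMoments_eq_zero_of_shiftMixture_eq hν hν' (hIcc hlam) (hIcc hlam') hmix)
  obtain rfl := eq_of_shiftMixture_eq hlam hmu₁ hmix
  exact ⟨rfl, rfl, funext fun x => by rw [hνF, hν'F], hmu₁⟩
end

section
/- Let λ, λ′ ∈ (0, 1/2) and let μ₁ ≠ μ₂ and μ₁′ ≠ μ₂′ be real numbers. If for all t ∈ ℝ one has λλ′ sin((μ₁−μ₁′)t) + λ(1−λ′) sin((μ₁−μ₂′)t) + (1−λ)λ′ sin((μ₂−μ₁′)t) + (1−λ)(1−λ′) sin((μ₂−μ₂′)t) = 0, then λ = λ′, μ₁ = μ₁′ and μ₂ = μ₂′. -/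
/-!
Write `X ~ λ δ_{μ₁} + (1 - λ) δ_{μ₂}` and `X' ~ λ' δ_{μ₁'} + (1 - λ') δ_{μ₂'}` for independent
variables; the identity says `E[sin (t (X - X'))] = 0`. Differentiating at `t = 0` kills every odd
moment of `X - X'`, and interpolating in `x²` (finitely many atoms) shows that the law of
`X - X'` is symmetric about `0`. Its four atoms `μᵢ - μⱼ'` are the vertices of a parallelogram,
so the largest and the smallest atom are single, opposite vertices; symmetry makes them opposite
numbers carrying equal weights. As `λλ' < (1 - λ)(1 - λ')`, these vertices must be `μ₁ - μ₂'` and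
`μ₂ - μ₁'`, whence `λ = λ'` and `μ₁ + μ₂ = μ₁' + μ₂'`. The vanishing mean then reads
`(1 - 2λ)(μ₂ - μ₂') = 0`.
-/

open Finset Real Polynomial

theorem sum_mul_pow_odd_eq_zero_of_forall_sum_mul_sin_eq_zero {ι : Type*} (s : Finset ι)
    (c x : ι → ℝ) (h : ∀ t, ∑ i ∈ s, c i * sin (x i * t) = 0) (k : ℕ) :
    ∑ i ∈ s, c i * x i ^ (2 * k + 1) = 0 := by
  have hderiv := congrFun (congrArg (iteratedDeriv (2 * k + 1)) (funext h)) 0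
  rw [iteratedDeriv_fun_sum (fun i _ => by fun_prop), iteratedDeriv_fun_const_zero] at hderiv
  simp only [iteratedDeriv_const_mul_field, iteratedDeriv_comp_const_mul contDiff_sin,
    iteratedDeriv_odd_sin, Pi.mul_apply, Pi.pow_apply, Pi.neg_apply, Pi.one_apply, mul_zero,
    cos_zero, mul_one, ← mul_assoc, ← sum_mul] at hderiv
  simpa using hderiv

theorem sum_filter_eq_zero_of_sum_mul_pow_eq_zero {ι : Type*} (s : Finset ι) (a y : ι → ℝ)
    (h : ∀ k < #s, ∑ i ∈ s, a i * y i ^ k = 0) (v : ℝ) :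
    ∑ i ∈ s with y i = v, a i = 0 := by
  classical
  by_cases hv : ∃ i ∈ s, y i = v
  swap
  · push Not at hv
    rw [filter_false_of_mem hv, sum_empty]
  obtain ⟨i₀, hi₀, rfl⟩ := hv
  set P : ℝ[X] := ∏ j ∈ s with y j ≠ y i₀, (X - C (y j))
  have hdeg : P.natDegree < #s := by
    rw [natDegree_finsetProd_X_sub_C_eq_card]
    exact card_lt_card (filter_ssubset.2 ⟨i₀, hi₀, by simp⟩)
  have hP : ∑ i ∈ s, a i * P.eval (y i) = 0 := by
    simp only [eval_eq_sum_range' hdeg, mul_sum]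
    rw [sum_comm]
    refine sum_eq_zero fun k hk => ?_
    simp only [mul_left_comm (a _), ← mul_sum, h k (mem_range.1 hk), mul_zero]
  have hPv : P.eval (y i₀) ≠ 0 := by
    rw [eval_prod]
    exact prod_ne_zero_iff.2 fun j hj => by
      simpa [sub_eq_zero, eq_comm] using (mem_filter.1 hj).2
  rw [← sum_filter_add_sum_filter_not s (fun i => y i = y i₀)] at hP
  rw [sum_eq_zero (s := s.filter (fun i => ¬ y i = y i₀)) fun i hi => ?_, add_zero] at hP
  · rw [sum_congr rfl fun i hi => by rw [(mem_filter.1 hi).2], ← sum_mul] at hP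
    exact (mul_eq_zero.1 hP).resolve_right hPv
  · rw [eval_prod, prod_eq_zero hi (by simp), mul_zero]

theorem sum_filter_eq_sum_filter_neg_of_forall_sum_mul_sin_eq_zero {ι : Type*} (s : Finset ι)
    (c x : ι → ℝ) (h : ∀ t, ∑ i ∈ s, c i * sin (x i * t) = 0) (a : ℝ) :
    ∑ i ∈ s with x i = a, c i = ∑ i ∈ s with x i = -a, c i := by
  classical
  rcases eq_or_ne a 0 with rfl | ha
  · rw [neg_zero]
  have hsq := sum_filter_eq_zero_of_sum_mul_pow_eq_zero s (fun i => c i * x i) (fun i => x i ^ 2)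
    (fun k _ => by simpa only [mul_assoc, ← pow_succ', ← pow_mul]
      using sum_mul_pow_odd_eq_zero_of_forall_sum_mul_sin_eq_zero s c x h k) (a ^ 2)
  simp only [sq_eq_sq_iff_eq_or_eq_neg, filter_or] at hsq
  have hconst : ∀ b, ∑ i ∈ s with x i = b, c i * x i = (∑ i ∈ s with x i = b, c i) * b :=
    fun b => by rw [sum_mul]; exact sum_congr rfl fun i hi => by rw [(mem_filter.1 hi).2]
  rw [sum_union (disjoint_filter.2 fun i _ h₁ h₂ => ha (by linarith)), hconst, hconst] at hsq
  have : a * (∑ i ∈ s with x i = a, c i - ∑ i ∈ s with x i = -a, c i) = 0 := by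
    linear_combination hsq
  exact sub_eq_zero.1 ((mul_eq_zero.1 this).resolve_left ha)

theorem eq_neg_and_eq_of_forall_lt_of_forall_gt {ι : Type*} (s : Finset ι) (c x : ι → ℝ)
    (hc : ∀ i ∈ s, 0 < c i)
    (hsymm : ∀ a, ∑ i ∈ s with x i = a, c i = ∑ i ∈ s with x i = -a, c i)
    {i k : ι} (hi : i ∈ s) (hk : k ∈ s) (hmax : ∀ j ∈ s, j ≠ i → x j < x i)
    (hmin : ∀ j ∈ s, j ≠ k → x k < x j) :
    x i = -x k ∧ c i = c k := by
  classical
  have hreflect : ∀ j ∈ s, ∃ j' ∈ s, x j' = -x j := by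
    intro j hj
    have hpos : 0 < ∑ i ∈ s with x i = -x j, c i := by
      rw [← hsymm]
      exact sum_pos' (fun i hi => (hc i (mem_filter.1 hi).1).le)
        ⟨j, mem_filter.2 ⟨hj, rfl⟩, hc j hj⟩
    obtain ⟨j', hj', -⟩ := exists_ne_zero_of_sum_ne_zero hpos.ne'
    exact ⟨j', (mem_filter.1 hj').1, (mem_filter.1 hj').2⟩
  have hle_max : ∀ j ∈ s, x j ≤ x i := fun j hj =>
    (eq_or_ne j i).elim (fun h => h ▸ le_rfl) fun h => (hmax j hj h).le
  have hge_min : ∀ j ∈ s, x k ≤ x j := fun j hj =>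
    (eq_or_ne j k).elim (fun h => h ▸ le_rfl) fun h => (hmin j hj h).le
  obtain ⟨i', hi', hxi'⟩ := hreflect i hi
  obtain ⟨k', hk', hxk'⟩ := hreflect k hk
  have hxik : x i = -x k := by linarith [hle_max k' hk', hge_min i' hi']
  refine ⟨hxik, ?_⟩
  have hatom : ∀ l ∈ s, (∀ j ∈ s, j ≠ l → x j ≠ x l) → ∑ j ∈ s with x j = x l, c j = c l :=
    fun l hl hne => sum_eq_single_of_mem l (mem_filter.2 ⟨hl, rfl⟩)
      fun j hj hjl => absurd (mem_filter.1 hj).2 (hne j (mem_filter.1 hj).1 hjl)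
  rw [← hatom i hi fun j hj h => (hmax j hj h).ne, hsymm, hxik, neg_neg,
    hatom k hk fun j hj h => (hmin j hj h).ne']

-- Weights and atoms of the law of `X - X'`, indexed by the pairs `(μ₁, μ₁')`, `(μ₁, μ₂')`,
-- `(μ₂, μ₁')`, `(μ₂, μ₂')`.
def diffWeight (lam lam' : ℝ) : Fin 4 → ℝ :=
  ![lam * lam', lam * (1 - lam'), (1 - lam) * lam', (1 - lam) * (1 - lam')]

def diffAtom (mu₁ mu₂ mu₁' mu₂' : ℝ) : Fin 4 → ℝ :=
  ![mu₁ - mu₁', mu₁ - mu₂', mu₂ - mu₁', mu₂ - mu₂']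

theorem diffWeight_pos {lam lam' : ℝ} (hlam : lam ∈ Set.Ioo (0 : ℝ) 1)
    (hlam' : lam' ∈ Set.Ioo (0 : ℝ) 1) (i : Fin 4) : 0 < diffWeight lam lam' i := by
  obtain ⟨hl₀, hl₁⟩ := hlam
  obtain ⟨hl₀', hl₁'⟩ := hlam'
  fin_cases i <;> exact mul_pos (by linarith) (by linarith)

theorem eq_and_add_eq_of_diffWeight_symmetric {lam lam' mu₁ mu₂ mu₁' mu₂' : ℝ}
    (hlam : lam ∈ Set.Ioo (0 : ℝ) (1 / 2)) (hlam' : lam' ∈ Set.Ioo (0 : ℝ) (1 / 2))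
    (hmu : mu₁ ≠ mu₂) (hmu' : mu₁' ≠ mu₂')
    (hsymm : ∀ a, ∑ i with diffAtom mu₁ mu₂ mu₁' mu₂' i = a, diffWeight lam lam' i
      = ∑ i with diffAtom mu₁ mu₂ mu₁' mu₂' i = -a, diffWeight lam lam' i) :
    lam = lam' ∧ mu₁ + mu₂ = mu₁' + mu₂' := by
  obtain ⟨hl₀, hl₁⟩ := hlam
  obtain ⟨hl₀', hl₁'⟩ := hlam'
  set x := diffAtom mu₁ mu₂ mu₁' mu₂'
  set c := diffWeight lam lam'
  have hpair (i k : Fin 4) (hmax : ∀ j ≠ i, x j < x i) (hmin : ∀ j ≠ k, x k < x j) :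
      x i = -x k ∧ c i = c k :=
    eq_neg_and_eq_of_forall_lt_of_forall_gt univ c x
      (fun i _ => diffWeight_pos ⟨hl₀, by linarith⟩ ⟨hl₀', by linarith⟩ i) hsymm
      (mem_univ i) (mem_univ k) (fun j _ => hmax j) (fun j _ => hmin j)
  rcases hmu.lt_or_gt with h₁ | h₁ <;> rcases hmu'.lt_or_gt with h₂ | h₂
  · obtain ⟨hx, hw⟩ : mu₂ - mu₁' = -(mu₁ - mu₂') ∧ (1 - lam) * lam' = lam * (1 - lam') :=
      hpair 2 1 (fun j hj => by fin_cases j <;> simp [x, diffAtom] at hj ⊢ <;> linarith)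
        (fun j hj => by fin_cases j <;> simp [x, diffAtom] at hj ⊢ <;> linarith)
    exact ⟨by linarith, by linarith⟩
  · have hw : (1 - lam) * (1 - lam') = lam * lam' :=
      (hpair 3 0 (fun j hj => by fin_cases j <;> simp [x, diffAtom] at hj ⊢ <;> linarith)
        (fun j hj => by fin_cases j <;> simp [x, diffAtom] at hj ⊢ <;> linarith)).2
    linarith
  · have hw : lam * lam' = (1 - lam) * (1 - lam') :=
      (hpair 0 3 (fun j hj => by fin_cases j <;> simp [x, diffAtom] at hj ⊢ <;> linarith)
        (fun j hj => by fin_cases j <;> simp [x, diffAtom] at hj ⊢ <;> linarith)).2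
    linarith
  · obtain ⟨hx, hw⟩ : mu₁ - mu₂' = -(mu₂ - mu₁') ∧ lam * (1 - lam') = (1 - lam) * lam' :=
      hpair 1 2 (fun j hj => by fin_cases j <;> simp [x, diffAtom] at hj ⊢ <;> linarith)
        (fun j hj => by fin_cases j <;> simp [x, diffAtom] at hj ⊢ <;> linarith)
    exact ⟨by linarith, by linarith⟩

/-- Parametric identifiability: if the sine combination vanishes identically, the two
parameter triples coincide. -/
theorem stmt_3 (lam lam' mu₁ mu₂ mu₁' mu₂' : ℝ)
    (hlam : lam ∈ Set.Ioo (0 : ℝ) (1 / 2)) (hlam' : lam' ∈ Set.Ioo (0 : ℝ) (1 / 2))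
    (hmu : mu₁ ≠ mu₂) (hmu' : mu₁' ≠ mu₂')
    (h : ∀ t : ℝ,
      lam * lam' * Real.sin ((mu₁ - mu₁') * t)
        + lam * (1 - lam') * Real.sin ((mu₁ - mu₂') * t)
        + (1 - lam) * lam' * Real.sin ((mu₂ - mu₁') * t)
        + (1 - lam) * (1 - lam') * Real.sin ((mu₂ - mu₂') * t) = 0) :
    lam = lam' ∧ mu₁ = mu₁' ∧ mu₂ = mu₂' := by
  have hsin : ∀ t, ∑ i, diffWeight lam lam' i * sin (diffAtom mu₁ mu₂ mu₁' mu₂' i * t) = 0 := by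
    simpa [Fin.sum_univ_four, diffWeight, diffAtom] using h
  obtain ⟨rfl, hsum⟩ := eq_and_add_eq_of_diffWeight_symmetric hlam hlam' hmu hmu'
    (sum_filter_eq_sum_filter_neg_of_forall_sum_mul_sin_eq_zero _ _ _ hsin)
  have hmean : lam * lam * (mu₁ - mu₁') + lam * (1 - lam) * (mu₁ - mu₂')
      + (1 - lam) * lam * (mu₂ - mu₁') + (1 - lam) * (1 - lam) * (mu₂ - mu₂') = 0 := by
    simpa [Fin.sum_univ_four, diffWeight, diffAtom] using
      sum_mul_pow_odd_eq_zero_of_forall_sum_mul_sin_eq_zero _ _ _ hsin 0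
  have hshift : (1 - 2 * lam) * (mu₂ - mu₂') = 0 := by linear_combination hmean - lam * hsum
  have hmu₂ : mu₂ = mu₂' :=
    sub_eq_zero.1 ((mul_eq_zero.1 hshift).resolve_left (by linarith [hlam.2]))
  exact ⟨rfl, by linarith, hmu₂⟩
end

section
/- Let λ′ ∈ [0, 1/2), μ₂ ∈ ℝ, and let μ₁′ ≠ μ₂′ be real numbers. If λ′ sin((μ₂−μ₁′)t) + (1−λ′) sin((μ₂−μ₂′)t) = 0 for all t ∈ ℝ, then λ′ = 0 and μ₂ = μ₂′. -/
/-! Any nonzero frequency `c` has a time `t` with `sin (c t) = 1`. At such a time for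
`μ₂ - μ₂'` the identity reads `λ' sin x + (1 - λ') = 0`, impossible since `|λ'| < 1 - λ'`; so
`μ₂ = μ₂'`, and then the same evaluation for `μ₂ - μ₁' ≠ 0` forces `λ' = 0`. -/

open Real

lemma exists_sin_mul_eq_one {c : ℝ} (hc : c ≠ 0) : ∃ t, sin (c * t) = 1 :=
  ⟨π / 2 / c, by rw [mul_div_cancel₀ _ hc, sin_pi_div_two]⟩

lemma mul_sin_add_ne_zero {a b : ℝ} (hab : |a| < b) (x : ℝ) : a * sin x + b ≠ 0 := by
  have : |a * sin x| ≤ |a| := by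
    rw [abs_mul]; exact mul_le_of_le_one_right (abs_nonneg a) (abs_sin_le_one x)
  linarith [neg_abs_le (a * sin x)]

lemma eq_zero_of_mul_sin_add_mul_sin_eq_zero {a b c d : ℝ} (hab : |a| < b)
    (h : ∀ t, a * sin (c * t) + b * sin (d * t) = 0) : d = 0 := by
  by_contra hd
  obtain ⟨t, ht⟩ := exists_sin_mul_eq_one hd
  exact mul_sin_add_ne_zero hab (c * t) (by simpa [ht] using h t)

lemma eq_zero_of_mul_sin_eq_zero {a c : ℝ} (hc : c ≠ 0) (h : ∀ t, a * sin (c * t) = 0) :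
    a = 0 := by
  obtain ⟨t, ht⟩ := exists_sin_mul_eq_one hc
  simpa [ht] using h t

/-- Degenerate case (mixing proportion `λ = 0`) of the trigonometric identity used to
prove identifiability of the two-component shifted symmetric mixture model. -/
theorem stmt_4 (lam' mu₂ mu₁' mu₂' : ℝ)
    (hlam' : lam' ∈ Set.Ico (0 : ℝ) (1 / 2)) (hmu' : mu₁' ≠ mu₂')
    (h : ∀ t : ℝ,
      lam' * Real.sin ((mu₂ - mu₁') * t) + (1 - lam') * Real.sin ((mu₂ - mu₂') * t) = 0) :
    lam' = 0 ∧ mu₂ = mu₂' := by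
  have hlam : |lam'| < 1 - lam' := by
    rw [abs_of_nonneg hlam'.1]; linarith [hlam'.2]
  have hmu : mu₂ = mu₂' := sub_eq_zero.mp (eq_zero_of_mul_sin_add_mul_sin_eq_zero hlam h)
  subst hmu
  refine ⟨eq_zero_of_mul_sin_eq_zero (sub_ne_zero.mpr hmu'.symm) fun t => ?_, rfl⟩
  simpa using h t
end

section
/- Let λ ∈ [0, 1), μ₁, μ₂ ∈ ℝ with η = μ₂ − μ₁, let F : ℝ → ℝ be bounded, and define G(x) = λF(x−μ₁) + (1−λ)F(x−μ₂) for all x ∈ ℝ. Then for every integer ℓ ≥ 1 and every x ∈ ℝ: F(x) = (1/(1−λ)) Σ_{k=0}^{ℓ−1} (−λ/(1−λ))^k G(x + μ₂ + kη) + (−λ/(1−λ))^ℓ F(x + ℓη). -/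
/-- Finite inversion formula: unrolling the recurrence `ℓ` times. -/
theorem stmt_5 (lam mu₁ mu₂ : ℝ) (hlam : lam ∈ Set.Ico (0 : ℝ) 1)
    (F : ℝ → ℝ) (hF : ∃ M : ℝ, ∀ x : ℝ, |F x| ≤ M)
    (G : ℝ → ℝ) (hG : ∀ x : ℝ, G x = lam * F (x - mu₁) + (1 - lam) * F (x - mu₂))
    (ℓ : ℕ) (hℓ : 1 ≤ ℓ) (x : ℝ) :
    F x = (1 / (1 - lam)) * ∑ k ∈ Finset.range ℓ,
            (-lam / (1 - lam)) ^ k * G (x + mu₂ + (k : ℝ) * (mu₂ - mu₁))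
          + (-lam / (1 - lam)) ^ ℓ * F (x + (ℓ : ℝ) * (mu₂ - mu₁)) := by
  have hne : (1 : ℝ) - lam ≠ 0 := by
    have := hlam.2; linarith
  -- one-step identity
  have step : ∀ y : ℝ, F y = (1 / (1 - lam)) * G (y + mu₂)
      + (-lam / (1 - lam)) * F (y + (mu₂ - mu₁)) := by
    intro y
    have h := hG (y + mu₂)
    have h1 : y + mu₂ - mu₂ = y := by ring
    have h2 : y + mu₂ - mu₁ = y + (mu₂ - mu₁) := by ring
    rw [h1, h2] at h
    field_simp
    linarith [h]
  clear hℓ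
  induction ℓ with
  | zero => simp
  | succ n ih =>
    rw [Finset.sum_range_succ]
    have hF' := step (x + (n : ℝ) * (mu₂ - mu₁))
    have h3 : x + (n : ℝ) * (mu₂ - mu₁) + mu₂ = x + mu₂ + (n : ℝ) * (mu₂ - mu₁) := by ring
    have h4 : x + (n : ℝ) * (mu₂ - mu₁) + (mu₂ - mu₁) = x + ((n : ℝ) + 1) * (mu₂ - mu₁) := by
      ring
    rw [h3, h4] at hF'
    rw [ih, hF']
    push_cast
    ring
end

section
/- Let λ ∈ [0, 1/2), μ₁ ≠ μ₂ real with η = μ₂ − μ₁, let F : ℝ → ℝ satisfy 0 ≤ F ≤ 1 (e.g., F a cdf), and define G(x) = λF(x−μ₁) + (1−λ)F(x−μ₂) for all x ∈ ℝ. Then the series (1/(1−λ)) Σ_{k=0}^∞ (−λ/(1−λ))^k G(x + μ₂ + kη) converges absolutely and uniformly in x, its sum equals F(x) for every x ∈ ℝ, and for every integer ℓ ≥ 1 the partial-sum error satisfies sup_{x∈ℝ} |F(x) − (1/(1−λ)) Σ_{k=0}^{ℓ−1} (−λ/(1−λ))^k G(x + μ₂ + kη)| ≤ (λ/(1−λ))^ℓ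 (1 + 1/(1−2λ)). -/
set_option maxHeartbeats 1000000

open Filter

/-- The inversion series converges absolutely and uniformly to `F`, with the stated
geometric bound on the partial-sum error. -/
theorem stmt_6 (lam mu₁ mu₂ : ℝ) (hlam : lam ∈ Set.Ico (0 : ℝ) (1 / 2)) (hmu : mu₁ ≠ mu₂)
    (F : ℝ → ℝ) (hF : ∀ x : ℝ, 0 ≤ F x ∧ F x ≤ 1)
    (G : ℝ → ℝ) (hG : ∀ x : ℝ, G x = lam * F (x - mu₁) + (1 - lam) * F (x - mu₂)) :
    (∀ x : ℝ, Summable (fun k : ℕ =>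
        |(1 / (1 - lam)) * (-lam / (1 - lam)) ^ k * G (x + mu₂ + (k : ℝ) * (mu₂ - mu₁))|)) ∧
    TendstoUniformly
      (fun ℓ : ℕ => fun x : ℝ => (1 / (1 - lam)) * ∑ k ∈ Finset.range ℓ,
        (-lam / (1 - lam)) ^ k * G (x + mu₂ + (k : ℝ) * (mu₂ - mu₁)))
      F atTop ∧
    (∀ x : ℝ, F x = (1 / (1 - lam)) * ∑' k : ℕ,
        (-lam / (1 - lam)) ^ k * G (x + mu₂ + (k : ℝ) * (mu₂ - mu₁))) ∧
    (∀ ℓ : ℕ, 1 ≤ ℓ → ∀ x : ℝ,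
      |F x - (1 / (1 - lam)) * ∑ k ∈ Finset.range ℓ,
          (-lam / (1 - lam)) ^ k * G (x + mu₂ + (k : ℝ) * (mu₂ - mu₁))|
        ≤ (lam / (1 - lam)) ^ ℓ * (1 + 1 / (1 - 2 * lam))) := by
  obtain ⟨hl0, hl2⟩ := hlam
  have h1 : (0:ℝ) < 1 - lam := by linarith
  have h1ne : (1 - lam) ≠ 0 := ne_of_gt h1
  set η := mu₂ - mu₁ with hη
  set r := -lam / (1 - lam) with hr
  have habs : |r| = lam / (1 - lam) := by
    rw [hr, abs_div, abs_neg, abs_of_nonneg hl0, abs_of_pos h1]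
  have habs0 : 0 ≤ |r| := abs_nonneg r
  have hrlt : |r| < 1 := by rw [habs, div_lt_one h1]; linarith
  have hG01 : ∀ y, 0 ≤ G y ∧ G y ≤ 1 := by
    intro y
    obtain ⟨ha1, ha2⟩ := hF (y - mu₁); obtain ⟨hb1, hb2⟩ := hF (y - mu₂)
    constructor
    · rw [hG]; nlinarith
    · rw [hG]; nlinarith
  have hGabs : ∀ y, |G y| ≤ 1 := fun y => abs_le.2 ⟨by linarith [(hG01 y).1], (hG01 y).2⟩
  have hFabs : ∀ y, |F y| ≤ 1 := fun y => abs_le.2 ⟨by linarith [(hF y).1], (hF y).2⟩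
  have hlc : lam * (1 / (1 - lam)) = -r := by rw [hr]; field_simp
  have h1c : (1 - lam) * (1 / (1 - lam)) = 1 := by field_simp
  -- key telescoping identity
  have key : ∀ ℓ : ℕ, ∀ x : ℝ,
      F x - (1 / (1 - lam)) * ∑ k ∈ Finset.range ℓ, r ^ k * G (x + mu₂ + (k:ℝ) * η)
        = r ^ ℓ * F (x + (ℓ:ℝ) * η) := by
    intro ℓ
    induction ℓ with
    | zero => intro x; simp
    | succ n ih =>
      intro x
      have e1 : x + mu₂ + (n:ℝ) * η - mu₁ = x + ((n:ℝ) + 1) * η := by rw [hη]; ring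
      have e2 : x + mu₂ + (n:ℝ) * η - mu₂ = x + (n:ℝ) * η := by ring
      rw [Finset.sum_range_succ, mul_add, hG, e1, e2]
      push_cast
      linear_combination (ih x) + (-(r ^ n * F (x + ((n:ℝ) + 1) * η))) * hlc
        + (-(r ^ n * F (x + (n:ℝ) * η))) * h1c
  have hbound : ∀ ℓ : ℕ, ∀ x : ℝ,
      |F x - (1 / (1 - lam)) * ∑ k ∈ Finset.range ℓ, r ^ k * G (x + mu₂ + (k:ℝ) * η)|
        ≤ |r| ^ ℓ := by
    intro ℓ x
    rw [key ℓ x, abs_mul, abs_pow]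
    calc |r| ^ ℓ * |F (x + (ℓ:ℝ) * η)| ≤ |r| ^ ℓ * 1 :=
          mul_le_mul_of_nonneg_left (hFabs _) (pow_nonneg habs0 ℓ)
      _ = |r| ^ ℓ := mul_one _
  have hpow0 : Tendsto (fun n : ℕ => |r| ^ n) atTop (nhds 0) :=
    tendsto_pow_atTop_nhds_zero_of_lt_one habs0 hrlt
  refine ⟨?_, ?_, ?_, ?_⟩
  · -- summability of absolute values
    intro x
    refine Summable.of_nonneg_of_le (fun k => abs_nonneg _) (fun k => ?_)
      ((summable_geometric_of_lt_one habs0 hrlt).mul_left (|1 / (1 - lam)|))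
    rw [abs_mul, abs_mul, abs_pow, mul_assoc]
    refine mul_le_mul_of_nonneg_left ?_ (abs_nonneg _)
    calc |r| ^ k * |G (x + mu₂ + (k:ℝ) * η)| ≤ |r| ^ k * 1 :=
          mul_le_mul_of_nonneg_left (hGabs _) (pow_nonneg habs0 k)
      _ = |r| ^ k := mul_one _
  · -- uniform convergence
    rw [Metric.tendstoUniformly_iff]
    intro ε hε
    filter_upwards [(hpow0.eventually (gt_mem_nhds hε) : ∀ᶠ n in atTop, |r| ^ n < ε)] with n hn x
    rw [Real.dist_eq]
    exact lt_of_le_of_lt (hbound n x) hn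
  · -- sum equals F
    intro x
    have hsummG : Summable (fun k : ℕ => r ^ k * G (x + mu₂ + (k:ℝ) * η)) := by
      apply Summable.of_abs
      refine Summable.of_nonneg_of_le (fun k => abs_nonneg _) (fun k => ?_)
        (summable_geometric_of_lt_one habs0 hrlt)
      rw [abs_mul, abs_pow]
      calc |r| ^ k * |G (x + mu₂ + (k:ℝ) * η)| ≤ |r| ^ k * 1 :=
            mul_le_mul_of_nonneg_left (hGabs _) (pow_nonneg habs0 k)
        _ = |r| ^ k := mul_one _
    have h1' : Tendsto (fun n : ℕ => (1 / (1 - lam)) *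
        ∑ k ∈ Finset.range n, r ^ k * G (x + mu₂ + (k:ℝ) * η)) atTop
        (nhds ((1 / (1 - lam)) * ∑' k : ℕ, r ^ k * G (x + mu₂ + (k:ℝ) * η))) :=
      (hsummG.hasSum.tendsto_sum_nat).const_mul _
    have h2' : Tendsto (fun n : ℕ => (1 / (1 - lam)) *
        ∑ k ∈ Finset.range n, r ^ k * G (x + mu₂ + (k:ℝ) * η)) atTop (nhds (F x)) := by
      rw [show nhds (F x) = nhds (F x - 0) by rw [sub_zero]]
      have : Tendsto (fun n : ℕ => F x - (1 / (1 - lam)) *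
          ∑ k ∈ Finset.range n, r ^ k * G (x + mu₂ + (k:ℝ) * η)) atTop (nhds 0) := by
        apply squeeze_zero_norm (fun n => hbound n x) hpow0
      have := (tendsto_const_nhds (x := F x) (f := atTop (α := ℕ))).sub this
      simpa using this
    exact tendsto_nhds_unique h2' h1'
  · -- error bound
    intro ℓ hℓ x
    have h2l : (0:ℝ) < 1 - 2 * lam := by linarith
    have hfac : (1:ℝ) ≤ 1 + 1 / (1 - 2 * lam) := by
      have : 0 < 1 / (1 - 2 * lam) := by positivity
      linarith
    calc |F x - (1 / (1 - lam)) * ∑ k ∈ Finset.range ℓ, r ^ k * G (x + mu₂ + (k:ℝ) * η)|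
        ≤ |r| ^ ℓ := hbound ℓ x
      _ = (lam / (1 - lam)) ^ ℓ := by rw [habs]
      _ = (lam / (1 - lam)) ^ ℓ * 1 := (mul_one _).symm
      _ ≤ (lam / (1 - lam)) ^ ℓ * (1 + 1 / (1 - 2 * lam)) := by
          refine mul_le_mul_of_nonneg_left hfac ?_
          positivity
end

section
/- Let λ ∈ [0, 1/2), μ₁ ≠ μ₂ real with η = μ₂ − μ₁, let f ∈ L¹(ℝ), and define g(x) = λf(x−μ₁) + (1−λ)f(x−μ₂). Then the series (1/(1−λ)) Σ_{k=0}^∞ (−λ/(1−λ))^k g(· + μ₂ + kη) converges in L¹(ℝ) and its sum equals f; in particular, f(x) = (1/(1−λ)) Σ_{k=0}^∞ (−λ/(1−λ))^k g(x + μ₂ + kη) for Lebesgue-almost every x ∈ ℝ. -/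
/-!
With `q = -λ/(1-λ)` and `η = μ₂ - μ₁` one has `(1-λ) q = -λ`, so the `k`-th term of the
series is a telescoping difference: `q^k g(x + μ₂ + kη) = (1-λ) (b k - b (k+1))` with
`b k = q^k f(x + kη)`. The partial sums therefore differ from `f` by `-b ℓ`, whose `L¹` norm
is `|q|^ℓ ‖f‖₁ → 0` because `|q| < 1` exactly when `λ < 1/2`. Summing these `L¹` norms shows
that `b` is summable for almost every `x`, and then the series telescopes to
`(1-λ) b 0 = (1-λ) f x`.
-/

open MeasureTheory Filter

theorem Summable.hasSum_sub_succ {G : Type*} [AddCommGroup G] [TopologicalSpace G]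
    [IsTopologicalAddGroup G] [T2Space G] {b : ℕ → G} (hb : Summable b) :
    HasSum (fun k => b k - b (k + 1)) (b 0) := by
  have hsucc := ((summable_nat_add_iff 1).2 hb).hasSum
  simpa [hb.tsum_eq_zero_add] using hb.hasSum.sub hsucc

theorem ae_summable_geometric_mul_comp_add {f : ℝ → ℝ} (hf : Integrable f) {q : ℝ}
    (hq : |q| < 1) (a : ℝ) : ∀ᵐ x, Summable fun k : ℕ => q ^ k * f (x + k * a) := by
  have hnorm (k : ℕ) : eLpNorm (fun x => q ^ k * f (x + k * a)) 1 volume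
      = ‖q‖ₑ ^ k * eLpNorm f 1 volume := by
    rw [show (fun x => q ^ k * f (x + k * a)) = q ^ k • fun x => f (x + k * a) from rfl,
      eLpNorm_const_smul, enorm_pow]
    congr 1
    exact eLpNorm_comp_measurePreserving hf.aestronglyMeasurable (measurePreserving_add_right _ _)
  have hsum : ∑' k : ℕ, eLpNorm (fun x => q ^ k * f (x + k * a)) 1 volume ≠ ⊤ := by
    simp_rw [hnorm, ENNReal.tsum_mul_right, ENNReal.tsum_geometric]
    refine ENNReal.mul_ne_top (ENNReal.inv_ne_top.2 (tsub_pos_of_lt ?_).ne')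
      (memLp_one_iff_integrable.2 hf).eLpNorm_ne_top
    simpa [← ofReal_norm] using hq
  filter_upwards [summable_norm_of_tsum_eLpNorm_ne_top le_rfl
    (fun k => ((hf.comp_add_right _).const_mul _).aestronglyMeasurable) hsum] with x hx
  exact hx.of_norm

section Inversion

variable {lam mu₁ mu₂ q : ℝ} {f g : ℝ → ℝ}
  (hg : ∀ x : ℝ, g x = lam * f (x - mu₁) + (1 - lam) * f (x - mu₂))
  (hq : (1 - lam) * q = -lam)
include hg hq

theorem geometric_mul_g_eq_sub (x : ℝ) (k : ℕ) :
    q ^ k * g (x + mu₂ + k * (mu₂ - mu₁)) = (1 - lam) *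
      (q ^ k * f (x + k * (mu₂ - mu₁)) - q ^ (k + 1) * f (x + (k + 1 : ℕ) * (mu₂ - mu₁))) := by
  rw [hg,
    show x + mu₂ + k * (mu₂ - mu₁) - mu₁ = x + (k + 1 : ℕ) * (mu₂ - mu₁) by push_cast; ring,
    show x + mu₂ + k * (mu₂ - mu₁) - mu₂ = x + k * (mu₂ - mu₁) by ring]
  linear_combination (q ^ k * f (x + (k + 1 : ℕ) * (mu₂ - mu₁))) * hq

theorem sum_geometric_mul_g (x : ℝ) (ℓ : ℕ) :
    ∑ k ∈ Finset.range ℓ, q ^ k * g (x + mu₂ + k * (mu₂ - mu₁))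
      = (1 - lam) * (f x - q ^ ℓ * f (x + ℓ * (mu₂ - mu₁))) := by
  simp_rw [geometric_mul_g_eq_sub hg hq, ← Finset.mul_sum,
    Finset.sum_range_sub' (fun k => q ^ k * f (x + k * (mu₂ - mu₁)))]
  simp

theorem tsum_geometric_mul_g {x : ℝ}
    (hb : Summable fun k : ℕ => q ^ k * f (x + k * (mu₂ - mu₁))) :
    ∑' k : ℕ, q ^ k * g (x + mu₂ + k * (mu₂ - mu₁)) = (1 - lam) * f x := by
  simp_rw [geometric_mul_g_eq_sub hg hq]
  simpa using (hb.hasSum_sub_succ.mul_left (1 - lam)).tsum_eq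

end Inversion

theorem stmt_7_general (lam mu₁ mu₂ : ℝ) (hlam : lam ∈ Set.Ico (0 : ℝ) (1 / 2))
    (f : ℝ → ℝ) (hf : Integrable f (volume : Measure ℝ))
    (g : ℝ → ℝ) (hg : ∀ x : ℝ, g x = lam * f (x - mu₁) + (1 - lam) * f (x - mu₂)) :
    Tendsto
      (fun ℓ : ℕ => ∫ x : ℝ,
        |(1 / (1 - lam)) * ∑ k ∈ Finset.range ℓ,
            (-lam / (1 - lam)) ^ k * g (x + mu₂ + (k : ℝ) * (mu₂ - mu₁)) - f x|)
      atTop (nhds 0) ∧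
    (∀ᵐ x : ℝ ∂(volume : Measure ℝ),
      f x = (1 / (1 - lam)) * ∑' k : ℕ,
        (-lam / (1 - lam)) ^ k * g (x + mu₂ + (k : ℝ) * (mu₂ - mu₁))) := by
  obtain ⟨hlam₀, hlam₁⟩ := hlam
  have hpos : 0 < 1 - lam := by linarith
  have hq : (1 - lam) * (-lam / (1 - lam)) = -lam := by field_simp
  have hq₁ : |-lam / (1 - lam)| < 1 := by
    rw [abs_div, abs_neg, abs_of_nonneg hlam₀, abs_of_pos hpos, div_lt_one hpos]; linarith
  constructor
  · have herr (ℓ : ℕ) (x : ℝ) : |(1 / (1 - lam)) * ∑ k ∈ Finset.range ℓ,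
        (-lam / (1 - lam)) ^ k * g (x + mu₂ + (k : ℝ) * (mu₂ - mu₁)) - f x|
        = |-lam / (1 - lam)| ^ ℓ * |f (x + ℓ * (mu₂ - mu₁))| := by
      rw [sum_geometric_mul_g hg hq, one_div, inv_mul_cancel_left₀ hpos.ne', sub_sub_cancel_left,
        abs_neg, abs_mul, abs_pow]
    simp_rw [herr, integral_const_mul, integral_add_right_eq_self (fun y => |f y|)]
    simpa using (tendsto_pow_atTop_nhds_zero_of_lt_one (abs_nonneg _) hq₁).mul_const (∫ x, |f x|)
  · filter_upwards [ae_summable_geometric_mul_comp_add hf hq₁ (mu₂ - mu₁)] with x hb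
    rw [tsum_geometric_mul_g hg hq hb, one_div, inv_mul_cancel_left₀ hpos.ne']

/-- The inversion series converges in `L¹(ℝ)` to `f`, and hence the inversion formula
holds for Lebesgue-almost every `x`. -/
theorem stmt_7 (lam mu₁ mu₂ : ℝ) (hlam : lam ∈ Set.Ico (0 : ℝ) (1 / 2)) (hmu : mu₁ ≠ mu₂)
    (f : ℝ → ℝ) (hf : Integrable f (volume : Measure ℝ))
    (g : ℝ → ℝ) (hg : ∀ x : ℝ, g x = lam * f (x - mu₁) + (1 - lam) * f (x - mu₂)) :
    Tendsto
      (fun ℓ : ℕ => ∫ x : ℝ,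
        |(1 / (1 - lam)) * ∑ k ∈ Finset.range ℓ,
            (-lam / (1 - lam)) ^ k * g (x + mu₂ + (k : ℝ) * (mu₂ - mu₁)) - f x|)
      atTop (nhds 0) ∧
    (∀ᵐ x : ℝ ∂(volume : Measure ℝ),
      f x = (1 / (1 - lam)) * ∑' k : ℕ,
        (-lam / (1 - lam)) ^ k * g (x + mu₂ + (k : ℝ) * (mu₂ - mu₁))) :=
  stmt_7_general lam mu₁ mu₂ hlam f hf g hg
end

section
/- Let d ∈ (0, 1/2) and let θ = (λ, μ₁, μ₂) with λ ∈ [0, 1/2 − d]. For all bounded H₁, H₂ : ℝ → ℝ, sup_{x∈ℝ} |(A_θ S_r A_θ⁻¹ H₁)(x) − (A_θ S_r A_θ⁻¹ H₂)(x)| ≤ (1/(2d)) · sup_{x∈ℝ} |H₁(x) − H₂(x)|. -/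
/-- The mixing operator `A_θ`. -/
noncomputable def Aop (lam mu₁ mu₂ : ℝ) (H : ℝ → ℝ) (x : ℝ) : ℝ :=
  lam * H (x - mu₁) + (1 - lam) * H (x - mu₂)

/-- The inverse mixing operator `A_θ⁻¹`, defined by the geometric series. -/
noncomputable def Ainv (lam mu₁ mu₂ : ℝ) (H : ℝ → ℝ) (x : ℝ) : ℝ :=
  (1 / (1 - lam)) * ∑' k : ℕ, (-lam / (1 - lam)) ^ k * H (x + mu₂ + (k : ℝ) * (mu₂ - mu₁))

/-- The symmetry operator `S_r`. -/
noncomputable def Sr (H : ℝ → ℝ) (x : ℝ) : ℝ := 1 - H (-x)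

lemma summable_aux (q : ℝ) (hq : |q| < 1) (H : ℝ → ℝ) (M : ℝ) (hM : ∀ x, |H x| ≤ M)
    (g : ℕ → ℝ) : Summable (fun k : ℕ => q ^ k * H (g k)) := by
  apply Summable.of_norm
  apply Summable.of_nonneg_of_le (fun k => norm_nonneg _) (fun k => ?_)
    ((summable_geometric_of_lt_one (abs_nonneg q) hq).mul_right M)
  rw [Real.norm_eq_abs, abs_mul, abs_pow]
  exact mul_le_mul_of_nonneg_left (hM _) (pow_nonneg (abs_nonneg q) k)

lemma tsum_diff_bound (q : ℝ) (hq : |q| < 1) (H₁ H₂ : ℝ → ℝ) (M₁ M₂ : ℝ)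
    (hM₁ : ∀ x, |H₁ x| ≤ M₁) (hM₂ : ∀ x, |H₂ x| ≤ M₂)
    (C : ℝ) (hC : ∀ x : ℝ, |H₁ x - H₂ x| ≤ C) (g : ℕ → ℝ) :
    |(∑' k : ℕ, q ^ k * H₁ (g k)) - ∑' k : ℕ, q ^ k * H₂ (g k)| ≤ C / (1 - |q|) := by
  have hs₁ := summable_aux q hq H₁ M₁ hM₁ g
  have hs₂ := summable_aux q hq H₂ M₂ hM₂ g
  rw [← Summable.tsum_sub hs₁ hs₂]
  have hsd := hs₁.sub hs₂
  have hsC : Summable (fun k : ℕ => |q| ^ k * C) :=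
    (summable_geometric_of_lt_one (abs_nonneg q) hq).mul_right C
  calc |∑' k : ℕ, (q ^ k * H₁ (g k) - q ^ k * H₂ (g k))|
      ≤ ∑' k : ℕ, |q ^ k * H₁ (g k) - q ^ k * H₂ (g k)| := by
        simp only [← Real.norm_eq_abs]
        exact norm_tsum_le_tsum_norm (by simpa [← Real.norm_eq_abs] using hsd.abs)
    _ ≤ ∑' k : ℕ, |q| ^ k * C := by
        apply Summable.tsum_le_tsum _ hsd.abs hsC
        intro k
        rw [← mul_sub, abs_mul, abs_pow]
        exact mul_le_mul_of_nonneg_left (hC _) (pow_nonneg (abs_nonneg q) k)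
    _ = C / (1 - |q|) := by
        rw [tsum_mul_right, tsum_geometric_of_lt_one (abs_nonneg q) hq,
          div_eq_mul_inv, mul_comm]

lemma ainv_diff_bound (lam mu₁ mu₂ : ℝ) (h0 : 0 ≤ lam) (h1 : 2 * lam < 1)
    (H₁ H₂ : ℝ → ℝ) (hH₁ : ∃ M : ℝ, ∀ x : ℝ, |H₁ x| ≤ M) (hH₂ : ∃ M : ℝ, ∀ x : ℝ, |H₂ x| ≤ M)
    (C : ℝ) (hC : ∀ x : ℝ, |H₁ x - H₂ x| ≤ C) (x : ℝ) :
    |Ainv lam mu₁ mu₂ H₁ x - Ainv lam mu₁ mu₂ H₂ x| ≤ C / (1 - 2 * lam) := by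
  obtain ⟨M₁, hM₁⟩ := hH₁
  obtain ⟨M₂, hM₂⟩ := hH₂
  have hpos : (0 : ℝ) < 1 - lam := by linarith
  have hqabs : |(-lam / (1 - lam))| = lam / (1 - lam) := by
    rw [abs_div, abs_neg, abs_of_nonneg h0, abs_of_pos hpos]
  have hq : |(-lam / (1 - lam))| < 1 := by
    rw [hqabs, div_lt_one hpos]; linarith
  have htsum := tsum_diff_bound (-lam / (1 - lam)) hq H₁ H₂ M₁ M₂ hM₁ hM₂ C hC
    (fun k : ℕ => x + mu₂ + (k : ℝ) * (mu₂ - mu₁))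
  have hC0 : 0 ≤ C := le_trans (abs_nonneg _) (hC 0)
  rw [Ainv, Ainv, ← mul_sub, abs_mul, abs_of_pos (by positivity : (0:ℝ) < 1 / (1 - lam))]
  have key : (1 / (1 - lam)) * (C / (1 - |(-lam / (1 - lam))|)) = C / (1 - 2 * lam) := by
    rw [hqabs]
    field_simp
    ring
  refine le_trans (mul_le_mul_of_nonneg_left htsum (by positivity)) (le_of_eq key)

/-- The operator `A_θ S_r A_θ⁻¹` is `1/(2d)`-Lipschitz for the supremum norm on bounded
functions, uniformly over `λ ∈ [0, 1/2 − d]`. -/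
theorem stmt_9 (d : ℝ) (hd : d ∈ Set.Ioo (0 : ℝ) (1 / 2))
    (lam mu₁ mu₂ : ℝ) (hlam : lam ∈ Set.Icc (0 : ℝ) (1 / 2 - d))
    (H₁ H₂ : ℝ → ℝ) (hH₁ : ∃ M : ℝ, ∀ x : ℝ, |H₁ x| ≤ M) (hH₂ : ∃ M : ℝ, ∀ x : ℝ, |H₂ x| ≤ M)
    (C : ℝ) (hC : ∀ x : ℝ, |H₁ x - H₂ x| ≤ C) :
    ∀ x : ℝ,
      |Aop lam mu₁ mu₂ (Sr (Ainv lam mu₁ mu₂ H₁)) x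
        - Aop lam mu₁ mu₂ (Sr (Ainv lam mu₁ mu₂ H₂)) x| ≤ (1 / (2 * d)) * C := by
  intro x
  obtain ⟨hd0, hd2⟩ := hd
  obtain ⟨hl0, hl2⟩ := hlam
  have h1 : 2 * lam < 1 := by linarith
  have hB := ainv_diff_bound lam mu₁ mu₂ hl0 h1 H₁ H₂ hH₁ hH₂ C hC
  have hC0 : 0 ≤ C := le_trans (abs_nonneg _) (hC 0)
  have hBd : C / (1 - 2 * lam) ≤ (1 / (2 * d)) * C := by
    rw [one_div, inv_mul_eq_div]
    apply div_le_div_of_nonneg_left hC0 (by linarith) -- 2d ≤ 1 - 2lam and 2d > 0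
    linarith
  have hSr : ∀ y : ℝ, |Sr (Ainv lam mu₁ mu₂ H₁) y - Sr (Ainv lam mu₁ mu₂ H₂) y|
      ≤ C / (1 - 2 * lam) := by
    intro y
    simp only [Sr]
    have heq : (1 - Ainv lam mu₁ mu₂ H₁ (-y)) - (1 - Ainv lam mu₁ mu₂ H₂ (-y))
        = -(Ainv lam mu₁ mu₂ H₁ (-y) - Ainv lam mu₁ mu₂ H₂ (-y)) := by ring
    rw [heq, abs_neg]
    exact hB (-y)
  refine le_trans ?_ hBd
  simp only [Aop]
  have heq2 : (lam * Sr (Ainv lam mu₁ mu₂ H₁) (x - mu₁)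
        + (1 - lam) * Sr (Ainv lam mu₁ mu₂ H₁) (x - mu₂))
      - (lam * Sr (Ainv lam mu₁ mu₂ H₂) (x - mu₁)
        + (1 - lam) * Sr (Ainv lam mu₁ mu₂ H₂) (x - mu₂))
      = lam * (Sr (Ainv lam mu₁ mu₂ H₁) (x - mu₁) - Sr (Ainv lam mu₁ mu₂ H₂) (x - mu₁))
      + (1 - lam) * (Sr (Ainv lam mu₁ mu₂ H₁) (x - mu₂) - Sr (Ainv lam mu₁ mu₂ H₂) (x - mu₂)) := by
    ring
  rw [heq2]
  calc |lam * (Sr (Ainv lam mu₁ mu₂ H₁) (x - mu₁) - Sr (Ainv lam mu₁ mu₂ H₂) (x - mu₁))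
      + (1 - lam) * (Sr (Ainv lam mu₁ mu₂ H₁) (x - mu₂) - Sr (Ainv lam mu₁ mu₂ H₂) (x - mu₂))|
      ≤ lam * |Sr (Ainv lam mu₁ mu₂ H₁) (x - mu₁) - Sr (Ainv lam mu₁ mu₂ H₂) (x - mu₁)|
      + (1 - lam) * |Sr (Ainv lam mu₁ mu₂ H₁) (x - mu₂) - Sr (Ainv lam mu₁ mu₂ H₂) (x - mu₂)| := by
        refine le_trans (abs_add_le _ _) ?_
        rw [abs_mul, abs_mul, abs_of_nonneg hl0, abs_of_nonneg (by linarith : (0:ℝ) ≤ 1 - lam)]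
    _ ≤ lam * (C / (1 - 2 * lam)) + (1 - lam) * (C / (1 - 2 * lam)) := by
        exact add_le_add (mul_le_mul_of_nonneg_left (hSr _) hl0)
          (mul_le_mul_of_nonneg_left (hSr _) (by linarith))
    _ = C / (1 - 2 * lam) := by ring
end

section
/- Let d ∈ (0, 1/2) and let G : ℝ → ℝ be bounded and Lipschitz. Then there exists a constant c ≥ 0 (depending only on d, the Lipschitz constant of G, and sup|G|) such that for all θ = (λ, μ₁, μ₂) and θ′ = (λ′, μ₁′, μ₂′) with λ, λ′ ∈ [0, 1/2 − d]: sup_{x∈ℝ} |(A_θ⁻¹G)(x) − (A_{θ′}⁻¹G)(x)| ≤ c |θ − θ′|₂, where |·|₂ is the Euclidean norm on ℝ³. -/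
/-- Euclidean norm on `ℝ³ = ℝ × ℝ × ℝ`. -/
noncomputable def enorm3 (θ : ℝ × ℝ × ℝ) : ℝ :=
  Real.sqrt (θ.1 ^ 2 + θ.2.1 ^ 2 + θ.2.2 ^ 2)

-- Multiplied through by `ρ` so that no truncated exponent `n - 1` appears.
lemma mul_abs_pow_sub_pow_le {ρ a b : ℝ} (ha : |a| ≤ ρ) (hb : |b| ≤ ρ) (n : ℕ) :
    ρ * |a ^ n - b ^ n| ≤ n * ρ ^ n * |a - b| := by
  rcases n with _ | n
  · simp
  have hρ : 0 ≤ ρ := (abs_nonneg a).trans ha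
  have h := abs_pow_sub_pow_le a b (n + 1)
  rw [Nat.add_sub_cancel] at h
  calc ρ * |a ^ (n + 1) - b ^ (n + 1)|
      ≤ ρ * (|a - b| * (n + 1 : ℕ) * max |a| |b| ^ n) := mul_le_mul_of_nonneg_left h hρ
    _ ≤ ρ * (|a - b| * (n + 1 : ℕ) * ρ ^ n) := by gcongr; exact max_le ha hb
    _ = (n + 1 : ℕ) * ρ ^ (n + 1) * |a - b| := by ring

lemma abs_tsum_sub_tsum_le {ι : Type*} {f g w : ι → ℝ} (hf : Summable f) (hg : Summable g)
    (hw : Summable w) (h : ∀ i, |f i - g i| ≤ w i) :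
    |∑' i, f i - ∑' i, g i| ≤ ∑' i, w i := by
  rw [← hf.tsum_sub hg]
  exact tsum_of_norm_bounded (f := fun i => f i - g i) hw.hasSum h

lemma summable_nat_add_one_mul_geometric {ρ : ℝ} (hρ₀ : 0 ≤ ρ) (hρ₁ : ρ < 1) :
    Summable (fun k : ℕ => ((k : ℝ) + 1) * ρ ^ k) := by
  have hk := summable_pow_mul_geometric_of_norm_lt_one 1
    (by rwa [Real.norm_eq_abs, abs_of_nonneg hρ₀] : ‖ρ‖ < 1)
  exact (hk.add (summable_geometric_of_lt_one hρ₀ hρ₁)).congr fun k => by ring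

section MixingRatio

variable {β lam lam' : ℝ}

lemma abs_neg_div_one_sub_le (hβ : β < 1) (hlam : lam ∈ Set.Icc 0 β) :
    |-lam / (1 - lam)| ≤ β / (1 - β) := by
  obtain ⟨h₀, h₁⟩ := hlam
  rw [abs_div, abs_neg, abs_of_nonneg h₀, abs_of_pos (by linarith)]
  exact div_le_div₀ (h₀.trans h₁) h₁ (by linarith) (by linarith)

lemma abs_neg_div_one_sub_sub_le (hβ : β < 1) (hlam : lam ∈ Set.Icc 0 β)
    (hlam' : lam' ∈ Set.Icc 0 β) :
    |-lam / (1 - lam) - -lam' / (1 - lam')| ≤ |lam - lam'| / (1 - β) ^ 2 := by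
  obtain ⟨hl₀, hl₁⟩ := hlam
  obtain ⟨hl₀', hl₁'⟩ := hlam'
  have h₀ : 0 < 1 - lam := by linarith
  have h₀' : 0 < 1 - lam' := by linarith
  have hEq : -lam / (1 - lam) - -lam' / (1 - lam') = (lam' - lam) / ((1 - lam) * (1 - lam')) := by
    field_simp
    ring
  rw [hEq, abs_div, abs_sub_comm, abs_of_pos (mul_pos h₀ h₀'), sq]
  gcongr

end MixingRatio

noncomputable def ainvTerm (G : ℝ → ℝ) (q μ₁ μ₂ x : ℝ) (k : ℕ) : ℝ :=
  (1 - q) * q ^ k * G (x + μ₂ + k * (μ₂ - μ₁))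

lemma Ainv_eq_tsum_ainvTerm (G : ℝ → ℝ) {lam : ℝ} (μ₁ μ₂ x : ℝ) (hlam : lam ≠ 1) :
    Ainv lam μ₁ μ₂ G x = ∑' k, ainvTerm G (-lam / (1 - lam)) μ₁ μ₂ x k := by
  have hs : 1 / (1 - lam) = 1 - -lam / (1 - lam) := by
    field_simp [sub_ne_zero.2 hlam.symm]
    ring
  rw [Ainv, ← tsum_mul_left, hs]
  simp only [ainvTerm, mul_assoc]

section Terms

variable {G : ℝ → ℝ} {L : NNReal} {M ρ q q' : ℝ}

lemma abs_one_sub_mul_pow_le (hρ₁ : ρ ≤ 1) (hq : |q| ≤ ρ) (k : ℕ) :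
    |(1 - q) * q ^ k| ≤ 2 * ρ ^ k := by
  rw [abs_mul, abs_pow]
  have h1 : |1 - q| ≤ 2 := (abs_sub _ _).trans (by rw [abs_one]; linarith)
  gcongr

lemma mul_abs_one_sub_mul_pow_sub_le (hρ₁ : ρ ≤ 1) (hq : |q| ≤ ρ) (hq' : |q'| ≤ ρ) (k : ℕ) :
    ρ * |(1 - q) * q ^ k - (1 - q') * q' ^ k| ≤ 2 * (k + 1) * ρ ^ k * |q - q'| := by
  have hρ₀ : 0 ≤ ρ := (abs_nonneg q).trans hq
  have hk := mul_abs_pow_sub_pow_le hq hq' k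
  have hk1 := mul_abs_pow_sub_pow_le hq hq' (k + 1)
  have hsplit : (1 - q) * q ^ k - (1 - q') * q' ^ k
      = (q ^ k - q' ^ k) - (q ^ (k + 1) - q' ^ (k + 1)) := by ring
  have hρk : ρ ^ (k + 1) ≤ ρ ^ k := pow_le_pow_of_le_one hρ₀ hρ₁ k.le_succ
  calc ρ * |(1 - q) * q ^ k - (1 - q') * q' ^ k|
      ≤ ρ * |q ^ k - q' ^ k| + ρ * |q ^ (k + 1) - q' ^ (k + 1)| := by
        rw [hsplit, ← mul_add]; exact mul_le_mul_of_nonneg_left (abs_sub _ _) hρ₀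
    _ ≤ k * ρ ^ k * |q - q'| + (k + 1 : ℕ) * ρ ^ k * |q - q'| := by
        refine add_le_add hk (hk1.trans ?_)
        exact mul_le_mul_of_nonneg_right (mul_le_mul_of_nonneg_left hρk (by positivity))
          (abs_nonneg _)
    _ ≤ 2 * (k + 1) * ρ ^ k * |q - q'| := by
        have : 0 ≤ ρ ^ k * |q - q'| := by positivity
        push_cast
        nlinarith

lemma abs_sub_shift_le (hG : LipschitzWith L G) (μ₁ μ₂ μ₁' μ₂' x : ℝ) (k : ℕ) :
    |G (x + μ₂ + k * (μ₂ - μ₁)) - G (x + μ₂' + k * (μ₂' - μ₁'))|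
      ≤ L * ((k + 1) * (|μ₁ - μ₁'| + |μ₂ - μ₂'|)) := by
  refine (hG.dist_le_mul _ _).trans (mul_le_mul_of_nonneg_left ?_ L.2)
  have hEq : x + μ₂ + k * (μ₂ - μ₁) - (x + μ₂' + k * (μ₂' - μ₁'))
      = (k + 1) * (μ₂ - μ₂') + k * -(μ₁ - μ₁') := by ring
  rw [Real.dist_eq, hEq]
  refine (abs_add_le _ _).trans ?_
  rw [abs_mul, abs_mul, abs_neg, abs_of_nonneg (by positivity : (0 : ℝ) ≤ k + 1), Nat.abs_cast]
  nlinarith [abs_nonneg (μ₁ - μ₁')]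

lemma abs_ainvTerm_le (hM : ∀ y, |G y| ≤ M) (hρ₁ : ρ ≤ 1) (hq : |q| ≤ ρ) (μ₁ μ₂ x : ℝ)
    (k : ℕ) : |ainvTerm G q μ₁ μ₂ x k| ≤ 2 * M * ρ ^ k := by
  have hρ₀ : 0 ≤ ρ := (abs_nonneg q).trans hq
  rw [ainvTerm, abs_mul]
  calc _ ≤ 2 * ρ ^ k * M :=
        mul_le_mul (abs_one_sub_mul_pow_le hρ₁ hq k) (hM _) (abs_nonneg _) (by positivity)
    _ = 2 * M * ρ ^ k := by ring

lemma summable_ainvTerm (hM : ∀ y, |G y| ≤ M) (hρ₁ : ρ < 1) (hq : |q| ≤ ρ) (μ₁ μ₂ x : ℝ) :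
    Summable (ainvTerm G q μ₁ μ₂ x) :=
  .of_norm_bounded ((summable_geometric_of_lt_one ((abs_nonneg q).trans hq) hρ₁).mul_left _)
    (abs_ainvTerm_le hM hρ₁.le hq μ₁ μ₂ x)

lemma mul_abs_ainvTerm_sub_le (hM : ∀ y, |G y| ≤ M) (hG : LipschitzWith L G)
    (hρ₁ : ρ ≤ 1) (hq : |q| ≤ ρ) (hq' : |q'| ≤ ρ) (μ₁ μ₂ μ₁' μ₂' x : ℝ) (k : ℕ) :
    ρ * |ainvTerm G q μ₁ μ₂ x k - ainvTerm G q' μ₁' μ₂' x k|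
      ≤ (k + 1) * ρ ^ k * (2 * M * |q - q'| + 2 * L * (|μ₁ - μ₁'| + |μ₂ - μ₂'|)) := by
  set c := (1 - q) * q ^ k
  set c' := (1 - q') * q' ^ k
  set g := G (x + μ₂ + k * (μ₂ - μ₁))
  set g' := G (x + μ₂' + k * (μ₂' - μ₁'))
  have hρ₀ : 0 ≤ ρ := (abs_nonneg q).trans hq
  have hcoef := mul_abs_one_sub_mul_pow_sub_le hρ₁ hq hq' k
  have hc' : |c'| ≤ 2 * ρ ^ k := abs_one_sub_mul_pow_le hρ₁ hq' k
  have hgg' := abs_sub_shift_le hG μ₁ μ₂ μ₁' μ₂' x k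
  have hsplit : ainvTerm G q μ₁ μ₂ x k - ainvTerm G q' μ₁' μ₂' x k
      = (c - c') * g + c' * (g - g') := by simp only [ainvTerm, c, c', g, g']; ring
  calc ρ * |ainvTerm G q μ₁ μ₂ x k - ainvTerm G q' μ₁' μ₂' x k|
      ≤ ρ * (|c - c'| * |g| + |c'| * |g - g'|) := by
        rw [hsplit, ← abs_mul, ← abs_mul]
        exact mul_le_mul_of_nonneg_left (abs_add_le _ _) hρ₀
    _ = ρ * |c - c'| * |g| + ρ * (|c'| * |g - g'|) := by ring
    _ ≤ 2 * (k + 1) * ρ ^ k * |q - q'| * M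
          + 1 * (2 * ρ ^ k * (L * ((k + 1) * (|μ₁ - μ₁'| + |μ₂ - μ₂'|)))) := by
        refine add_le_add (mul_le_mul hcoef (hM _) (abs_nonneg _) (by positivity))
          (mul_le_mul hρ₁ ?_ (by positivity) zero_le_one)
        exact mul_le_mul hc' hgg' (abs_nonneg _) (by positivity)
    _ = _ := by ring

lemma abs_tsum_ainvTerm_sub_le (hM : ∀ y, |G y| ≤ M) (hG : LipschitzWith L G) (hρ₀ : 0 < ρ)
    (hρ₁ : ρ < 1) (hq : |q| ≤ ρ) (hq' : |q'| ≤ ρ) (μ₁ μ₂ μ₁' μ₂' x : ℝ) :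
    |∑' k, ainvTerm G q μ₁ μ₂ x k - ∑' k, ainvTerm G q' μ₁' μ₂' x k|
      ≤ (∑' k : ℕ, ((k : ℝ) + 1) * ρ ^ k) / ρ
        * (2 * M * |q - q'| + 2 * L * (|μ₁ - μ₁'| + |μ₂ - μ₂'|)) := by
  set E := 2 * M * |q - q'| + 2 * L * (|μ₁ - μ₁'| + |μ₂ - μ₂'|)
  have hw := (summable_nat_add_one_mul_geometric hρ₀.le hρ₁).mul_right (E / ρ)
  calc _ ≤ ∑' k : ℕ, ((k : ℝ) + 1) * ρ ^ k * (E / ρ) := by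
        refine abs_tsum_sub_tsum_le (summable_ainvTerm hM hρ₁ hq μ₁ μ₂ x)
          (summable_ainvTerm hM hρ₁ hq' μ₁' μ₂' x) hw fun k => ?_
        rw [← mul_div_assoc, le_div_iff₀' hρ₀]
        exact mul_abs_ainvTerm_sub_le hM hG hρ₁.le hq hq' μ₁ μ₂ μ₁' μ₂' x k
    _ = _ := by rw [tsum_mul_right]; ring

end Terms

lemma exists_abs_Ainv_sub_Ainv_le {G : ℝ → ℝ} {M β : ℝ} {L : NNReal}
    (hM : ∀ y, |G y| ≤ M) (hG : LipschitzWith L G) (hβ₀ : 0 < β) (hβ : β < 1 / 2) :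
    ∃ C, 0 ≤ C ∧ ∀ lam lam' μ₁ μ₂ μ₁' μ₂' x : ℝ, lam ∈ Set.Icc 0 β → lam' ∈ Set.Icc 0 β →
      |Ainv lam μ₁ μ₂ G x - Ainv lam' μ₁' μ₂' G x|
        ≤ C * (|lam - lam'| + |μ₁ - μ₁'| + |μ₂ - μ₂'|) := by
  set ρ := β / (1 - β)
  have hρ₀ : 0 < ρ := div_pos hβ₀ (by linarith)
  have hρ₁ : ρ < 1 := (div_lt_one (by linarith)).2 (by linarith)
  set S := ∑' k : ℕ, ((k : ℝ) + 1) * ρ ^ k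
  have hS : 0 ≤ S := tsum_nonneg fun k => by positivity
  have hM₀ : 0 ≤ M := (abs_nonneg _).trans (hM 0)
  refine ⟨S / ρ * (2 * M / (1 - β) ^ 2 + 2 * L), by positivity, ?_⟩
  intro lam lam' μ₁ μ₂ μ₁' μ₂' x hlam hlam'
  have hq := abs_neg_div_one_sub_le (by linarith) hlam
  have hq' := abs_neg_div_one_sub_le (by linarith) hlam'
  have hqq' := abs_neg_div_one_sub_sub_le (by linarith) hlam hlam'
  rw [Ainv_eq_tsum_ainvTerm G μ₁ μ₂ x (by linarith [hlam.2]),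
    Ainv_eq_tsum_ainvTerm G μ₁' μ₂' x (by linarith [hlam'.2])]
  refine (abs_tsum_ainvTerm_sub_le hM hG hρ₀ hρ₁ hq hq' μ₁ μ₂ μ₁' μ₂' x).trans ?_
  rw [mul_assoc (S / ρ)]
  refine mul_le_mul_of_nonneg_left ?_ (div_nonneg hS hρ₀.le)
  calc 2 * M * |-lam / (1 - lam) - -lam' / (1 - lam')| + 2 * (L : ℝ) * (|μ₁ - μ₁'| + |μ₂ - μ₂'|)
      ≤ 2 * M * (|lam - lam'| / (1 - β) ^ 2) + 2 * L * (|μ₁ - μ₁'| + |μ₂ - μ₂'|) := by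
        gcongr
    _ = 2 * M / (1 - β) ^ 2 * |lam - lam'| + 2 * L * (|μ₁ - μ₁'| + |μ₂ - μ₂'|) := by ring
    _ ≤ _ := by
        have := abs_nonneg (lam - lam')
        have := abs_nonneg (μ₁ - μ₁')
        have := abs_nonneg (μ₂ - μ₂')
        have : 0 ≤ 2 * M / (1 - β) ^ 2 := by positivity
        have : (0 : ℝ) ≤ L := L.2
        nlinarith

lemma abs_add_abs_add_abs_le_enorm3 (θ : ℝ × ℝ × ℝ) :
    |θ.1| + |θ.2.1| + |θ.2.2| ≤ 3 * enorm3 θ := by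
  have h₁ : |θ.1| ≤ enorm3 θ := Real.abs_le_sqrt (by nlinarith [sq_nonneg θ.2.1, sq_nonneg θ.2.2])
  have h₂ : |θ.2.1| ≤ enorm3 θ := Real.abs_le_sqrt (by nlinarith [sq_nonneg θ.1, sq_nonneg θ.2.2])
  have h₃ : |θ.2.2| ≤ enorm3 θ := Real.abs_le_sqrt (by nlinarith [sq_nonneg θ.1, sq_nonneg θ.2.1])
  linarith

/-- For `G` bounded and Lipschitz, the map `θ ↦ A_θ⁻¹ G` is Lipschitz for the supremum
norm, uniformly over `λ ∈ [0, 1/2 − d]`. -/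
theorem stmt_10 (d : ℝ) (hd : d ∈ Set.Ioo (0 : ℝ) (1 / 2))
    (G : ℝ → ℝ) (hGbd : ∃ M : ℝ, ∀ x : ℝ, |G x| ≤ M)
    (L : NNReal) (hGlip : LipschitzWith L G) :
    ∃ c : ℝ, 0 ≤ c ∧
      ∀ θ θ' : ℝ × ℝ × ℝ, θ.1 ∈ Set.Icc (0 : ℝ) (1 / 2 - d) →
        θ'.1 ∈ Set.Icc (0 : ℝ) (1 / 2 - d) →
        ∀ x : ℝ,
          |Ainv θ.1 θ.2.1 θ.2.2 G x - Ainv θ'.1 θ'.2.1 θ'.2.2 G x|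
            ≤ c * enorm3 (θ - θ') := by
  obtain ⟨M, hM⟩ := hGbd
  obtain ⟨C, hC, hAinv⟩ :=
    exists_abs_Ainv_sub_Ainv_le hM hGlip (β := 1 / 2 - d) (by linarith [hd.2]) (by linarith [hd.1])
  refine ⟨3 * C, by positivity, fun θ θ' hθ hθ' x => ?_⟩
  calc _ ≤ C * (|θ.1 - θ'.1| + |θ.2.1 - θ'.2.1| + |θ.2.2 - θ'.2.2|) :=
        hAinv _ _ _ _ _ _ x hθ hθ'
    _ ≤ C * (3 * enorm3 (θ - θ')) := by gcongr; exact abs_add_abs_add_abs_le_enorm3 (θ - θ')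
    _ = 3 * C * enorm3 (θ - θ') := by ring
end

section
/- Under condition C1, the map θ ↦ G_θ(x) is Lipschitz on Θ uniformly in x ∈ ℝ: there exists c ≥ 0 such that |G_θ(x) − G_{θ′}(x)| ≤ c |θ − θ′|₂ for all θ, θ′ ∈ Θ and all x ∈ ℝ; consequently the contrast function K is Lipschitz on Θ: there exists C ≥ 0 such that |K(θ) − K(θ′)| ≤ C |θ − θ′|₂ for all θ, θ′ ∈ Θ. -/
/-! For `λ ≤ 1/2 - d` the ratio `q = -λ/(1-λ)` satisfies `|q| ≤ ρ := (1/2-d)/(1/2+d) < 1`, so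
`A_θ⁻¹ G (y) = (1-λ)⁻¹ ∑ₖ qᵏ G(y + μ₂ + k(μ₂ - μ₁))` is a series whose `k`-th term is bounded
by `ρᵏ` and Lipschitz in `(λ, μ₁, μ₂, y)` with constant `O((1 + k) ρᵏ⁻¹)`, which is summable.
Sums and products of bounded Lipschitz functions are bounded Lipschitz, so `(θ, x) ↦ G_θ(x)` is
bounded and jointly Lipschitz on `Θ × ℝ`, hence Lipschitz in `θ` uniformly in `x`. Finally
`K(θ) - K(θ') = ∫ (G_θ - G_θ')(G_θ + G_θ' - 2G) dP` with a bounded second factor and `P` finite. -/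

open MeasureTheory

open Metric Set
open scoped NNReal

section Lipschitz

variable {α : Type*} [PseudoMetricSpace α] {s : Set α}

theorem LipschitzOnWith.mul_of_norm_le {R : Type*} [SeminormedRing R] {f g : α → R}
    {Kf Kg Mf Mg : ℝ≥0} (hf : LipschitzOnWith Kf f s) (hg : LipschitzOnWith Kg g s)
    (hfM : ∀ x ∈ s, ‖f x‖ ≤ Mf) (hgM : ∀ x ∈ s, ‖g x‖ ≤ Mg) :
    LipschitzOnWith (Mf * Kg + Kf * Mg) (fun x => f x * g x) s := by
  refine LipschitzOnWith.of_dist_le_mul fun x hx y hy => ?_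
  have hfd := hf.dist_le_mul x hx y hy
  have hgd := hg.dist_le_mul x hx y hy
  rw [dist_eq_norm] at hfd hgd ⊢
  calc ‖f x * g x - f y * g y‖ = ‖f x * (g x - g y) + (f x - f y) * g y‖ := by noncomm_ring
    _ ≤ ‖f x‖ * ‖g x - g y‖ + ‖f x - f y‖ * ‖g y‖ :=
      (norm_add_le _ _).trans (add_le_add (norm_mul_le _ _) (norm_mul_le _ _))
    _ ≤ Mf * (Kg * dist x y) + Kf * dist x y * Mg := by
      gcongr
      exacts [hfM x hx, hgM y hy]
    _ = ↑(Mf * Kg + Kf * Mg) * dist x y := by push_cast; ring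

theorem LipschitzOnWith.tsum {ι E : Type*} [NormedAddCommGroup E] {f : ι → α → E} {K : ι → ℝ≥0}
    (hf : ∀ i, LipschitzOnWith (K i) (f i) s) (hK : Summable K)
    (hsum : ∀ x ∈ s, Summable fun i => f i x) :
    LipschitzOnWith (∑' i, K i) (fun x => ∑' i, f i x) s := by
  refine LipschitzOnWith.of_dist_le_mul fun x hx y hy => ?_
  rw [dist_eq_norm, ← (hsum x hx).tsum_sub (hsum y hy), NNReal.coe_tsum, ← tsum_mul_right]
  refine tsum_of_norm_bounded ((NNReal.summable_coe.2 hK).mul_right _).hasSum fun i => ?_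
  rw [← dist_eq_norm]
  exact (hf i).dist_le_mul x hx y hy

def IsBoundedLipschitzOn {E : Type*} [SeminormedAddCommGroup E] (f : α → E) (s : Set α) : Prop :=
  ∃ K M : ℝ≥0, LipschitzOnWith K f s ∧ ∀ x ∈ s, ‖f x‖ ≤ M

namespace IsBoundedLipschitzOn

variable {E : Type*} [SeminormedAddCommGroup E]

theorem const (c : E) : IsBoundedLipschitzOn (fun _ => c) s :=
  ⟨0, ‖c‖₊, (LipschitzWith.const c).lipschitzOnWith, fun _ _ => le_rfl⟩

theorem of_lipschitzWith {f : α → E} {K M : ℝ≥0} (hf : LipschitzWith K f)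
    (hM : ∀ x ∈ s, ‖f x‖ ≤ M) : IsBoundedLipschitzOn f s :=
  ⟨K, M, hf.lipschitzOnWith, hM⟩

theorem add {f g : α → E} (hf : IsBoundedLipschitzOn f s) (hg : IsBoundedLipschitzOn g s) :
    IsBoundedLipschitzOn (fun x => f x + g x) s := by
  obtain ⟨Kf, Mf, hfK, hfM⟩ := hf
  obtain ⟨Kg, Mg, hgK, hgM⟩ := hg
  refine ⟨Kf + Kg, Mf + Mg, hfK.add hgK, fun x hx => ?_⟩
  push_cast
  exact (norm_add_le _ _).trans (add_le_add (hfM x hx) (hgM x hx))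

theorem sub {f g : α → E} (hf : IsBoundedLipschitzOn f s) (hg : IsBoundedLipschitzOn g s) :
    IsBoundedLipschitzOn (fun x => f x - g x) s := by
  obtain ⟨Kf, Mf, hfK, hfM⟩ := hf
  obtain ⟨Kg, Mg, hgK, hgM⟩ := hg
  refine ⟨Kf + Kg, Mf + Mg, hfK.sub hgK, fun x hx => ?_⟩
  push_cast
  exact (norm_sub_le _ _).trans (add_le_add (hfM x hx) (hgM x hx))

theorem mul {R : Type*} [SeminormedRing R] {f g : α → R} (hf : IsBoundedLipschitzOn f s)
    (hg : IsBoundedLipschitzOn g s) : IsBoundedLipschitzOn (fun x => f x * g x) s := by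
  obtain ⟨Kf, Mf, hfK, hfM⟩ := hf
  obtain ⟨Kg, Mg, hgK, hgM⟩ := hg
  refine ⟨_, Mf * Mg, hfK.mul_of_norm_le hgK hfM hgM, fun x hx => ?_⟩
  push_cast
  exact (norm_mul_le _ _).trans (mul_le_mul (hfM x hx) (hgM x hx) (norm_nonneg _) Mf.2)

theorem congr {f g : α → E} (hf : IsBoundedLipschitzOn f s) (hfg : EqOn f g s) :
    IsBoundedLipschitzOn g s := by
  obtain ⟨K, M, hfK, hfM⟩ := hf
  refine ⟨K, M, fun x hx y hy => ?_, fun x hx => hfg hx ▸ hfM x hx⟩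
  rw [← hfg hx, ← hfg hy]
  exact hfK hx hy

theorem comp {β : Type*} [PseudoMetricSpace β] {t : Set β} {f : β → E} {g : α → β} {K : ℝ≥0}
    (hf : IsBoundedLipschitzOn f t) (hg : LipschitzOnWith K g s) (hst : MapsTo g s t) :
    IsBoundedLipschitzOn (fun x => f (g x)) s := by
  obtain ⟨Kf, Mf, hfK, hfM⟩ := hf
  exact ⟨Kf * K, Mf, hfK.comp hg hst, fun x hx => hfM (g x) (hst hx)⟩

end IsBoundedLipschitzOn

variable {β γ : Type*} [PseudoMetricSpace β] [PseudoMetricSpace γ]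

theorem LipschitzOnWith.lipschitzWith_prodMk_left {f : α × β → γ} {K : ℝ≥0} {t : Set α}
    (hf : LipschitzOnWith K f (t ×ˢ univ)) {a : α} (ha : a ∈ t) :
    LipschitzWith K fun b => f (a, b) := by
  rw [← lipschitzOnWith_univ, ← mul_one K]
  exact hf.comp (LipschitzWith.prodMk_left a).lipschitzOnWith fun b _ => ⟨ha, trivial⟩

theorem LipschitzOnWith.dist_prodMk_right_le {f : α × β → γ} {K : ℝ≥0} {t : Set α}
    (hf : LipschitzOnWith K f (t ×ˢ univ)) {a a' : α} (ha : a ∈ t) (ha' : a' ∈ t) (b : β) :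
    dist (f (a, b)) (f (a', b)) ≤ K * dist a a' := by
  simpa [Prod.dist_eq] using hf.dist_le_mul (a, b) ⟨ha, trivial⟩ (a', b) ⟨ha', trivial⟩

end Lipschitz

theorem lipschitzOnWith_pow_closedBall (ρ : ℝ≥0) (k : ℕ) :
    LipschitzOnWith (k * ρ ^ (k - 1)) (fun x : ℝ => x ^ k) (closedBall 0 ρ) := by
  refine LipschitzOnWith.of_dist_le_mul fun x hx y hy => ?_
  rw [mem_closedBall_zero_iff, Real.norm_eq_abs] at hx hy
  rw [Real.dist_eq, Real.dist_eq]
  calc |x ^ k - y ^ k| ≤ |x - y| * k * max |x| |y| ^ (k - 1) := abs_pow_sub_pow_le x y k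
    _ ≤ |x - y| * k * ρ ^ (k - 1) := by gcongr; exact max_le hx hy
    _ = ↑((k : ℝ≥0) * ρ ^ (k - 1)) * |x - y| := by push_cast; ring

theorem summable_natCast_mul_pow_pred {ρ : ℝ} (hρ0 : 0 ≤ ρ) (hρ : ρ < 1) :
    Summable fun k : ℕ => (k : ℝ) * ρ ^ (k - 1) := by
  rw [← summable_nat_add_iff 1]
  simp only [Nat.cast_add, Nat.cast_one, Nat.add_sub_cancel, add_mul, one_mul]
  have h := summable_pow_mul_geometric_of_norm_lt_one 1 (r := ρ) (by rwa [Real.norm_of_nonneg hρ0])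
  simp only [pow_one] at h
  exact h.add (summable_geometric_of_lt_one hρ0 hρ)

theorem lipschitzWith_add_natCast_mul (k : ℕ) :
    LipschitzWith (1 + k) (fun p : ℝ × ℝ => p.1 + k * p.2) := by
  refine LipschitzWith.of_dist_le_mul fun p q => ?_
  have h1 : dist p.1 q.1 ≤ dist p q := le_max_left _ _
  have h2 : dist p.2 q.2 ≤ dist p q := le_max_right _ _
  rw [Real.dist_eq] at h1 h2 ⊢
  calc |p.1 + k * p.2 - (q.1 + k * q.2)| = |(p.1 - q.1) + k * (p.2 - q.2)| := by ring_nf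
    _ ≤ |p.1 - q.1| + k * |p.2 - q.2| := by
      refine (abs_add_le _ _).trans ?_
      rw [abs_mul, Nat.abs_cast]
    _ ≤ dist p q + k * dist p q := by gcongr
    _ = ↑(1 + (k : ℝ≥0)) * dist p q := by push_cast; ring

noncomputable def shiftSeries (H : ℝ → ℝ) (p : ℝ × ℝ × ℝ) : ℝ :=
  ∑' k : ℕ, p.1 ^ k * H (p.2.1 + k * p.2.2)

theorem isBoundedLipschitzOn_shiftSeries {H : ℝ → ℝ} (hH : IsBoundedLipschitzOn H univ)
    {ρ : ℝ≥0} (hρ : ρ < 1) : IsBoundedLipschitzOn (shiftSeries H) (closedBall 0 ρ ×ˢ univ) := by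
  obtain ⟨L, M, hL, hM⟩ := hH
  have hpow (k : ℕ) : LipschitzOnWith (k * ρ ^ (k - 1) * 1) (fun p : ℝ × ℝ × ℝ => p.1 ^ k)
      (closedBall 0 ρ ×ˢ univ) :=
    (lipschitzOnWith_pow_closedBall ρ k).comp LipschitzWith.prod_fst.lipschitzOnWith
      fun p hp => hp.1
  have hpowM (k : ℕ) (p : ℝ × ℝ × ℝ) (hp : p ∈ closedBall (0 : ℝ) ρ ×ˢ univ) :
      ‖p.1 ^ k‖ ≤ ↑(ρ ^ k) := by
    rw [norm_pow, NNReal.coe_pow]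
    exact pow_le_pow_left₀ (norm_nonneg _) (mem_closedBall_zero_iff.1 hp.1) k
  have hshift (k : ℕ) := ((lipschitzOnWith_univ.1 hL).comp
    ((lipschitzWith_add_natCast_mul k).comp LipschitzWith.prod_snd)).lipschitzOnWith
      (s := closedBall (0 : ℝ) ρ ×ˢ univ)
  have hterm (k : ℕ) := (hpow k).mul_of_norm_le (hshift k) (hpowM k) fun p _ => hM _ trivial
  have hgeo : Summable fun k : ℕ => (ρ : ℝ) ^ k := summable_geometric_of_lt_one ρ.coe_nonneg hρ
  have hbound (p : ℝ × ℝ × ℝ) (hp : p ∈ closedBall (0 : ℝ) ρ ×ˢ univ) (k : ℕ) :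
      ‖p.1 ^ k * H (p.2.1 + k * p.2.2)‖ ≤ M * ρ ^ k := by
    rw [norm_mul, mul_comm]
    exact mul_le_mul (hM _ trivial) (hpowM k p hp) (norm_nonneg _) M.2
  refine ⟨_, M * ∑' k, ρ ^ k, LipschitzOnWith.tsum hterm ?_ fun p hp => ?_, fun p hp => ?_⟩
  · refine NNReal.summable_coe.1 ?_
    push_cast
    have hk : Summable fun k : ℕ => (k : ℝ) * ρ ^ k := by
      simpa using summable_pow_mul_geometric_of_norm_lt_one 1 (r := (ρ : ℝ))
        (by rwa [NNReal.norm_eq])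
    refine (((hgeo.add hk).mul_left (L : ℝ)).congr fun k => by ring).add
      (((summable_natCast_mul_pow_pred ρ.coe_nonneg hρ).mul_right (M : ℝ)).congr fun k => by ring)
  · exact Summable.of_norm_bounded (hgeo.mul_left (M : ℝ)) (hbound p hp)
  · rw [NNReal.coe_mul, NNReal.coe_tsum]
    exact tsum_of_norm_bounded (hgeo.hasSum.mul_left _) (hbound p hp)

theorem lipschitzOnWith_one_div_one_sub :
    LipschitzOnWith 4 (fun l : ℝ => 1 / (1 - l)) (Iic (1 / 2)) := by
  refine LipschitzOnWith.of_dist_le_mul fun l hl l' hl' => ?_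
  rw [mem_Iic] at hl hl'
  have hden : 1 / 4 ≤ (1 - l) * (1 - l') := by nlinarith
  rw [Real.dist_eq, Real.dist_eq, div_sub_div _ _ (by linarith) (by linarith), abs_div,
    abs_of_pos (by linarith : 0 < (1 - l) * (1 - l')), div_le_iff₀ (by linarith),
    show 1 * (1 - l') - (1 - l) * 1 = l - l' by ring]
  push_cast
  nlinarith [abs_nonneg (l - l')]

theorem isBoundedLipschitzOn_one_div_one_sub :
    IsBoundedLipschitzOn (fun l : ℝ => 1 / (1 - l)) (Iic (1 / 2)) := by
  refine ⟨4, 2, lipschitzOnWith_one_div_one_sub, fun l hl => ?_⟩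
  rw [mem_Iic] at hl
  rw [Real.norm_eq_abs, abs_of_pos (by simp only [one_div, inv_pos]; linarith),
    div_le_iff₀ (by linarith)]
  push_cast
  linarith

theorem abs_one_sub_one_div_one_sub_le {l b : ℝ} (hl : l ∈ Icc 0 b) (hb : b < 1) :
    |1 - 1 / (1 - l)| ≤ b / (1 - b) := by
  obtain ⟨hl0, hlb⟩ := hl
  have hl1 : 1 - l ≠ 0 := by linarith
  rw [show 1 - 1 / (1 - l) = -(l / (1 - l)) by field_simp; ring, abs_neg,
    abs_of_nonneg (div_nonneg hl0 (by linarith))]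
  exact div_le_div₀ (by linarith) hlb (by linarith) (by linarith)

-- Writing the ratio `-λ/(1-λ)` as `1 - 1/(1-λ)` reduces its Lipschitz bound to that of `1/(1-λ)`.
theorem Ainv_eq_mul_shiftSeries {lam : ℝ} (hlam : lam ≠ 1) (mu₁ mu₂ : ℝ) (H : ℝ → ℝ) (y : ℝ) :
    Ainv lam mu₁ mu₂ H y =
      1 / (1 - lam) * shiftSeries H (1 - 1 / (1 - lam), y + mu₂, mu₂ - mu₁) := by
  rw [show 1 - 1 / (1 - lam) = -lam / (1 - lam) by field_simp [sub_ne_zero.2 hlam.symm]; ring]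
  rfl

theorem isBoundedLipschitzOn_Ainv {H : ℝ → ℝ} (hH : IsBoundedLipschitzOn H univ) {b : ℝ}
    (hb : b < 1 / 2) :
    IsBoundedLipschitzOn (fun p : (ℝ × ℝ × ℝ) × ℝ => Ainv p.1.1 p.1.2.1 p.1.2.2 H p.2)
      ((Icc 0 b ×ˢ univ) ×ˢ univ) := by
  set S : Set ((ℝ × ℝ × ℝ) × ℝ) := (Icc 0 b ×ˢ univ) ×ˢ univ
  set ρ := Real.toNNReal (b / (1 - b))
  have hρ : ρ < 1 := Real.toNNReal_lt_one.2 ((div_lt_one (by linarith)).2 (by linarith))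
  have hlam : MapsTo (fun p : (ℝ × ℝ × ℝ) × ℝ => p.1.1) S (Iic (1 / 2)) :=
    fun p hp => hp.1.1.2.trans hb.le
  have hfst : LipschitzWith 1 (fun p : (ℝ × ℝ × ℝ) × ℝ => p.1.1) :=
    (LipschitzWith.prod_fst.comp LipschitzWith.prod_fst).weaken (one_mul 1).le
  have hμ₁ := LipschitzWith.prod_fst.comp (LipschitzWith.prod_snd.comp
    (LipschitzWith.prod_fst (α := ℝ × ℝ × ℝ) (β := ℝ)))
  have hμ₂ := LipschitzWith.prod_snd.comp (LipschitzWith.prod_snd.comp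
    (LipschitzWith.prod_fst (α := ℝ × ℝ × ℝ) (β := ℝ)))
  set ψ : (ℝ × ℝ × ℝ) × ℝ → ℝ × ℝ × ℝ :=
    fun p => (1 - 1 / (1 - p.1.1), p.2 + p.1.2.2, p.1.2.2 - p.1.2.1)
  have hψ : LipschitzOnWith _ ψ S :=
    ((LipschitzWith.const 1).lipschitzOnWith.sub
      (lipschitzOnWith_one_div_one_sub.comp hfst.lipschitzOnWith hlam)).prodMk
      ((LipschitzWith.prod_snd.add hμ₂).prodMk (hμ₂.sub hμ₁)).lipschitzOnWith
  have hψS : MapsTo ψ S (closedBall 0 ρ ×ˢ univ) := fun p hp =>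
    ⟨mem_closedBall_zero_iff.2 ((abs_one_sub_one_div_one_sub_le hp.1.1 (by linarith)).trans
      (Real.le_coe_toNNReal _)), trivial⟩
  refine ((isBoundedLipschitzOn_one_div_one_sub.comp hfst.lipschitzOnWith hlam).mul
    ((isBoundedLipschitzOn_shiftSeries hH hρ).comp hψ hψS)).congr fun p hp => ?_
  exact (Ainv_eq_mul_shiftSeries (by linarith [hp.1.1.2]) _ _ _ _).symm

theorem isBoundedLipschitzOn_Aop {H : ℝ → ℝ} (hH : IsBoundedLipschitzOn H univ)
    (lam mu₁ mu₂ : ℝ) : IsBoundedLipschitzOn (Aop lam mu₁ mu₂ H) univ := by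
  have hshift (c : ℝ) := hH.comp (s := univ)
    (LipschitzWith.id.sub (LipschitzWith.const c)).lipschitzOnWith (mapsTo_univ _ _)
  exact ((IsBoundedLipschitzOn.const lam).mul (hshift mu₁)).add
    ((IsBoundedLipschitzOn.const (1 - lam)).mul (hshift mu₂))

theorem isBoundedLipschitzOn_Aop_Sr_Ainv {H : ℝ → ℝ} (hH : IsBoundedLipschitzOn H univ) {b : ℝ}
    (hb : b < 1 / 2) :
    IsBoundedLipschitzOn (fun p : (ℝ × ℝ × ℝ) × ℝ =>
        Aop p.1.1 p.1.2.1 p.1.2.2 (Sr (Ainv p.1.1 p.1.2.1 p.1.2.2 H)) p.2)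
      ((Icc 0 b ×ˢ univ) ×ˢ univ) := by
  set S : Set ((ℝ × ℝ × ℝ) × ℝ) := (Icc 0 b ×ˢ univ) ×ˢ univ
  have hlam : IsBoundedLipschitzOn (fun p : (ℝ × ℝ × ℝ) × ℝ => p.1.1) S :=
    .of_lipschitzWith (M := 1) (LipschitzWith.prod_fst.comp LipschitzWith.prod_fst) fun p hp => by
      rw [Real.norm_eq_abs, abs_of_nonneg hp.1.1.1, NNReal.coe_one]
      linarith [hp.1.1.2]
  have hSr {m : (ℝ × ℝ × ℝ) × ℝ → ℝ} {K : ℝ≥0} (hm : LipschitzWith K m) :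
      IsBoundedLipschitzOn (fun p => Sr (Ainv p.1.1 p.1.2.1 p.1.2.2 H) (p.2 - m p)) S :=
    (IsBoundedLipschitzOn.const 1).sub ((isBoundedLipschitzOn_Ainv hH hb).comp
      (LipschitzWith.prod_fst.prodMk (LipschitzWith.prod_snd.sub hm).neg).lipschitzOnWith
      fun p hp => ⟨hp.1, trivial⟩)
  have hμ₁ := LipschitzWith.prod_fst.comp (LipschitzWith.prod_snd.comp
    (LipschitzWith.prod_fst (α := ℝ × ℝ × ℝ) (β := ℝ)))
  have hμ₂ := LipschitzWith.prod_snd.comp (LipschitzWith.prod_snd.comp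
    (LipschitzWith.prod_fst (α := ℝ × ℝ × ℝ) (β := ℝ)))
  exact (hlam.mul (hSr hμ₁)).add (((IsBoundedLipschitzOn.const 1).sub hlam).mul (hSr hμ₂))

theorem dist_le_enorm3 (θ θ' : ℝ × ℝ × ℝ) : dist θ θ' ≤ enorm3 (θ - θ') := by
  simp only [Prod.dist_eq, Real.dist_eq, enorm3, Prod.fst_sub, Prod.snd_sub]
  refine max_le (Real.abs_le_sqrt ?_) (max_le (Real.abs_le_sqrt ?_) (Real.abs_le_sqrt ?_)) <;>
    nlinarith [sq_nonneg (θ.1 - θ'.1), sq_nonneg (θ.2.1 - θ'.2.1), sq_nonneg (θ.2.2 - θ'.2.2)]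

theorem abs_integral_sq_sub_integral_sq_le {X : Type*} [MeasurableSpace X] {μ : Measure X}
    [IsFiniteMeasure μ] {u v : X → ℝ} {M ε : ℝ} (hu : AEStronglyMeasurable u μ)
    (hv : AEStronglyMeasurable v μ) (huM : ∀ x, |u x| ≤ M) (hvM : ∀ x, |v x| ≤ M)
    (huv : ∀ x, |u x - v x| ≤ ε) :
    |∫ x, u x ^ 2 ∂μ - ∫ x, v x ^ 2 ∂μ| ≤ ε * (2 * M) * μ.real univ := by
  have hint {w : X → ℝ} (hw : AEStronglyMeasurable w μ) (hwM : ∀ x, |w x| ≤ M) :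
      Integrable (fun x => w x ^ 2) μ :=
    Integrable.of_bound (μ := μ) (hw.pow 2) (M ^ 2) (ae_of_all _ fun x => by
      rw [Real.norm_eq_abs, abs_pow]
      exact pow_le_pow_left₀ (abs_nonneg _) (hwM x) 2)
  rw [← integral_sub (hint hu huM) (hint hv hvM), ← Real.norm_eq_abs]
  refine norm_integral_le_of_norm_le_const (ae_of_all _ fun x => ?_)
  rw [Real.norm_eq_abs, show u x ^ 2 - v x ^ 2 = (u x - v x) * (u x + v x) by ring, abs_mul]
  exact mul_le_mul (huv x) ((abs_add_le _ _).trans (by linarith [huM x, hvM x]))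
    (abs_nonneg _) ((abs_nonneg _).trans (huv x))

theorem stmt_11_general
    (ν : Measure ℝ) (hprob : IsProbabilityMeasure ν)
    (F₀ : ℝ → ℝ) (hF₀ : ∀ x : ℝ, F₀ x = (ν (Set.Iic x)).toReal)
    -- condition C1
    (hlip : ∃ L : NNReal, LipschitzWith L F₀)
    (lam₀ mu₁₀ mu₂₀ : ℝ)
    (G : ℝ → ℝ) (hG : ∀ x : ℝ, G x = lam₀ * F₀ (x - mu₁₀) + (1 - lam₀) * F₀ (x - mu₂₀))
    -- the Lebesgue–Stieltjes measure of G is the mixture measure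
    (P : Measure ℝ)
    (hP : P = ENNReal.ofReal lam₀ • ν.map (fun x => x + mu₁₀)
        + ENNReal.ofReal (1 - lam₀) • ν.map (fun x => x + mu₂₀))
    (Gθ : ℝ × ℝ × ℝ → ℝ → ℝ)
    (hGθ : ∀ θ : ℝ × ℝ × ℝ, ∀ x : ℝ,
      Gθ θ x = Aop θ.1 θ.2.1 θ.2.2 (Sr (Ainv θ.1 θ.2.1 θ.2.2 G)) x)
    (K : ℝ × ℝ × ℝ → ℝ)
    (hK : ∀ θ : ℝ × ℝ × ℝ, K θ = ∫ x : ℝ, (Gθ θ x - G x) ^ 2 ∂P)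
    -- the parameter set Θ
    (d : ℝ) (hd : d ∈ Set.Ioo (0 : ℝ) (1 / 2))
    (𝒳 : Set (ℝ × ℝ))
    (Θ : Set (ℝ × ℝ × ℝ))
    (hΘ : Θ = {θ : ℝ × ℝ × ℝ | θ.1 ∈ Set.Icc (0 : ℝ) (1 / 2 - d) ∧ θ.2 ∈ 𝒳}) :
    (∃ c : ℝ, 0 ≤ c ∧ ∀ θ ∈ Θ, ∀ θ' ∈ Θ, ∀ x : ℝ,
        |Gθ θ x - Gθ θ' x| ≤ c * enorm3 (θ - θ')) ∧
    (∃ C : ℝ, 0 ≤ C ∧ ∀ θ ∈ Θ, ∀ θ' ∈ Θ,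
        |K θ - K θ'| ≤ C * enorm3 (θ - θ')) := by
  obtain ⟨L, hL⟩ := hlip
  have hF : IsBoundedLipschitzOn F₀ univ := .of_lipschitzWith (M := 1) hL fun x _ => by
    rw [hF₀, Real.norm_eq_abs, abs_of_nonneg ENNReal.toReal_nonneg, NNReal.coe_one]
    exact measureReal_le_one
  have hGbl : IsBoundedLipschitzOn G univ := funext hG ▸ isBoundedLipschitzOn_Aop hF lam₀ mu₁₀ mu₂₀
  obtain ⟨c, M, hc, hM⟩ :=
    isBoundedLipschitzOn_Aop_Sr_Ainv hGbl (b := 1 / 2 - d) (by linarith [hd.1])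
  obtain ⟨LG, MG, hLG, hMG⟩ := hGbl
  simp only [← hGθ] at hc hM
  have hΘ' : Θ ⊆ Icc 0 (1 / 2 - d) ×ˢ univ := hΘ ▸ fun θ hθ => ⟨hθ.1, trivial⟩
  have hGθ_lip {θ} (hθ : θ ∈ Θ) {θ'} (hθ' : θ' ∈ Θ) (x : ℝ) :
      |Gθ θ x - Gθ θ' x| ≤ c * enorm3 (θ - θ') :=
    (hc.dist_prodMk_right_le (hΘ' hθ) (hΘ' hθ') x).trans
      (mul_le_mul_of_nonneg_left (dist_le_enorm3 θ θ') c.2)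
  have hmeas {θ} (hθ : θ ∈ Θ) : AEStronglyMeasurable (fun x => Gθ θ x - G x) P :=
    ((hc.lipschitzWith_prodMk_left (hΘ' hθ)).continuous.sub
      (lipschitzOnWith_univ.1 hLG).continuous).aestronglyMeasurable
  have hbound {θ} (hθ : θ ∈ Θ) (x : ℝ) : |Gθ θ x - G x| ≤ M + MG :=
    (abs_sub _ _).trans (add_le_add (hM (θ, x) ⟨hΘ' hθ, trivial⟩) (hMG x trivial))
  have : IsFiniteMeasure P := ⟨by simp [hP, ENNReal.mul_lt_top]⟩
  refine ⟨⟨c, c.2, fun θ hθ θ' hθ' => hGθ_lip hθ hθ'⟩,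
    ⟨c * (2 * (M + MG)) * P.real univ, by positivity, fun θ hθ θ' hθ' => ?_⟩⟩
  rw [hK, hK]
  calc _ ≤ c * enorm3 (θ - θ') * (2 * (M + MG)) * P.real univ :=
        abs_integral_sq_sub_integral_sq_le (hmeas hθ) (hmeas hθ') (hbound hθ) (hbound hθ')
          fun x => by rw [sub_sub_sub_cancel_right]; exact hGθ_lip hθ hθ' x
    _ = c * (2 * (M + MG)) * P.real univ * enorm3 (θ - θ') := by ring

/-- Under C1, `θ ↦ G_θ(x)` is Lipschitz on `Θ` uniformly in `x`, and the contrast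
function `K` is Lipschitz on `Θ`. -/
theorem stmt_11
    (ν : Measure ℝ) (hprob : IsProbabilityMeasure ν) (hsym : ν.map (fun x => -x) = ν)
    (F₀ : ℝ → ℝ) (hF₀ : ∀ x : ℝ, F₀ x = (ν (Set.Iic x)).toReal)
    -- condition C1
    (hmono : StrictMono F₀) (hlip : ∃ L : NNReal, LipschitzWith L F₀)
    (lam₀ mu₁₀ mu₂₀ : ℝ) (hlam₀ : lam₀ ∈ Set.Ico (0 : ℝ) (1 / 2)) (hmu₀ : mu₁₀ ≠ mu₂₀)
    (G : ℝ → ℝ) (hG : ∀ x : ℝ, G x = lam₀ * F₀ (x - mu₁₀) + (1 - lam₀) * F₀ (x - mu₂₀))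
    -- the Lebesgue–Stieltjes measure of G is the mixture measure
    (P : Measure ℝ)
    (hP : P = ENNReal.ofReal lam₀ • ν.map (fun x => x + mu₁₀)
        + ENNReal.ofReal (1 - lam₀) • ν.map (fun x => x + mu₂₀))
    (Gθ : ℝ × ℝ × ℝ → ℝ → ℝ)
    (hGθ : ∀ θ : ℝ × ℝ × ℝ, ∀ x : ℝ,
      Gθ θ x = Aop θ.1 θ.2.1 θ.2.2 (Sr (Ainv θ.1 θ.2.1 θ.2.2 G)) x)
    (K : ℝ × ℝ × ℝ → ℝ)
    (hK : ∀ θ : ℝ × ℝ × ℝ, K θ = ∫ x : ℝ, (Gθ θ x - G x) ^ 2 ∂P)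
    -- the parameter set Θ
    (d : ℝ) (hd : d ∈ Set.Ioo (0 : ℝ) (1 / 2))
    (𝒳 : Set (ℝ × ℝ)) (h𝒳c : IsCompact 𝒳) (h𝒳Δ : ∀ p ∈ 𝒳, p.1 ≠ p.2)
    (Θ : Set (ℝ × ℝ × ℝ))
    (hΘ : Θ = {θ : ℝ × ℝ × ℝ | θ.1 ∈ Set.Icc (0 : ℝ) (1 / 2 - d) ∧ θ.2 ∈ 𝒳}) :
    (∃ c : ℝ, 0 ≤ c ∧ ∀ θ ∈ Θ, ∀ θ' ∈ Θ, ∀ x : ℝ,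
        |Gθ θ x - Gθ θ' x| ≤ c * enorm3 (θ - θ')) ∧
    (∃ C : ℝ, 0 ≤ C ∧ ∀ θ ∈ Θ, ∀ θ' ∈ Θ,
        |K θ - K θ'| ≤ C * enorm3 (θ - θ')) :=
  stmt_11_general ν hprob F₀ hF₀ hlip lam₀ mu₁₀ mu₂₀ G hG P hP Gθ hGθ K hK d hd 𝒳 Θ hΘ
end

section
/- Assume condition C1 and let d ∈ (0, 1/2) with λ₀ ∈ [0, 1/2 − d]. There exists c ≥ 0 (depending only on d and the Lipschitz constant of F₀) such that for every θ = (λ, μ₁, μ₂) with λ ∈ [0, 1/2 − d] and every bounded H : ℝ → ℝ, the symmetrized inversion estimate F̂ = (1/2)(I + S_r)(A_θ⁻¹ H) satisfies sup_{x∈ℝ} |F̂(x) − F₀(x)| ≤ (1/(2d)) · sup_{x∈ℝ} |H(x) − G(x)| + c |θ − θ₀|₂. -/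
open MeasureTheory

/-!
`Ainv θ` is a left inverse of the mixing operator `A_θ F = λ F(· - μ₁) + (1 - λ) F(· - μ₂)` on
bounded functions (the series telescopes), and its geometric series has sup-norm gain
`1 / ((1 - λ)(1 - λ/(1 - λ))) = 1 / (1 - 2λ) ≤ 1 / (2d)`. Hence
`Ainv θ H - F₀ = Ainv θ (H - A_θ F₀)`, and `H - A_θ F₀` is at most `δ` plus
`‖A_{θ₀} F₀ - A_θ F₀‖_∞ ≤ |λ - λ₀| + L (|μ₁ - μ₁₀| + |μ₂ - μ₂₀|)` since `G = A_{θ₀} F₀`.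
Symmetrizing costs nothing because `F₀(x) + F₀(-x) = 1` for the continuous symmetric cdf `F₀`.
-/

open Set ProbabilityTheory

lemma abs_le_enorm3 (θ : ℝ × ℝ × ℝ) :
    |θ.1| ≤ enorm3 θ ∧ |θ.2.1| ≤ enorm3 θ ∧ |θ.2.2| ≤ enorm3 θ := by
  simp only [enorm3, ← Real.sqrt_sq_eq_abs]
  refine ⟨?_, ?_, ?_⟩ <;> gcongr <;> nlinarith [sq_nonneg θ.1, sq_nonneg θ.2.1, sq_nonneg θ.2.2]

lemma tsum_sub_succ {f : ℕ → ℝ} (hf : Summable f) : ∑' k, (f k - f (k + 1)) = f 0 := by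
  rw [hf.tsum_sub ((summable_nat_add_iff 1).2 hf), hf.tsum_eq_zero_add, add_sub_cancel_right]

lemma summable_pow_mul_of_abs_le {r : ℝ} (hr : |r| < 1) {H : ℝ → ℝ} {M : ℝ}
    (hH : ∀ x, |H x| ≤ M) (g : ℕ → ℝ) : Summable fun k => r ^ k * H (g k) := by
  refine .of_norm_bounded ((summable_geometric_of_lt_one (abs_nonneg r) hr).mul_right M) fun k => ?_
  rw [Real.norm_eq_abs, abs_mul, abs_pow]
  exact mul_le_mul_of_nonneg_left (hH _) (by positivity)

/-- The operator `A_θ` of the paper, inverted by `Ainv`. -/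
def Amix (lam mu₁ mu₂ : ℝ) (F : ℝ → ℝ) (x : ℝ) : ℝ :=
  lam * F (x - mu₁) + (1 - lam) * F (x - mu₂)

section Mixing

variable {lam mu₁ mu₂ : ℝ}

lemma abs_Amix_le (hlam : lam ∈ Icc 0 1) {F : ℝ → ℝ} {M : ℝ} (hF : ∀ x, |F x| ≤ M) (x : ℝ) :
    |Amix lam mu₁ mu₂ F x| ≤ M := by
  obtain ⟨hlam0, hlam1⟩ := hlam
  have h1 : 0 ≤ 1 - lam := sub_nonneg.2 hlam1
  calc |Amix lam mu₁ mu₂ F x| ≤ |lam * F (x - mu₁)| + |(1 - lam) * F (x - mu₂)| :=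
        abs_add_le _ _
    _ ≤ lam * M + (1 - lam) * M := by
        rw [abs_mul, abs_mul, abs_of_nonneg hlam0, abs_of_nonneg h1]
        gcongr <;> exact hF _
    _ = M := by ring

lemma abs_Amix_sub_Amix_le {F : ℝ → ℝ} (hF : ∀ x, F x ∈ Icc 0 1) {L : NNReal}
    (hL : LipschitzWith L F) (hlam : lam ∈ Icc 0 1) (lam₀ mu₁₀ mu₂₀ x : ℝ) :
    |Amix lam₀ mu₁₀ mu₂₀ F x - Amix lam mu₁ mu₂ F x|
      ≤ |lam - lam₀| + L * (|mu₁ - mu₁₀| + |mu₂ - mu₂₀|) := by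
  have hLip : ∀ a b : ℝ, |F (x - a) - F (x - b)| ≤ L * |b - a| := fun a b => by
    have := hL.dist_le_mul (x - a) (x - b)
    rwa [Real.dist_eq, Real.dist_eq, show x - a - (x - b) = -(a - b) by ring, abs_neg,
      abs_sub_comm a] at this
  have h₀ : |F (x - mu₁₀) - F (x - mu₂₀)| ≤ 1 :=
    abs_sub_le_of_nonneg_of_le (hF _).1 (hF _).2 (hF _).1 (hF _).2
  have key : Amix lam₀ mu₁₀ mu₂₀ F x - Amix lam mu₁ mu₂ F x
      = (lam₀ - lam) * (F (x - mu₁₀) - F (x - mu₂₀)) + lam * (F (x - mu₁₀) - F (x - mu₁))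
        + (1 - lam) * (F (x - mu₂₀) - F (x - mu₂)) := by simp only [Amix]; ring
  obtain ⟨hlam0, hlam1⟩ := hlam
  have hLa : 0 ≤ (L : ℝ) * |mu₁ - mu₁₀| := by positivity
  have hLb : 0 ≤ (L : ℝ) * |mu₂ - mu₂₀| := by positivity
  calc |Amix lam₀ mu₁₀ mu₂₀ F x - Amix lam mu₁ mu₂ F x|
      ≤ |(lam₀ - lam) * (F (x - mu₁₀) - F (x - mu₂₀))| + |lam * (F (x - mu₁₀) - F (x - mu₁))|
        + |(1 - lam) * (F (x - mu₂₀) - F (x - mu₂))| := by rw [key]; exact abs_add_three _ _ _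
    _ ≤ |lam - lam₀| * 1 + lam * (L * |mu₁ - mu₁₀|) + (1 - lam) * (L * |mu₂ - mu₂₀|) := by
        rw [abs_mul, abs_mul, abs_mul, abs_of_nonneg hlam0, abs_of_nonneg (sub_nonneg.2 hlam1),
          abs_sub_comm lam₀]
        gcongr
        exacts [hLip mu₁₀ mu₁, hLip mu₂₀ mu₂]
    _ ≤ |lam - lam₀| + L * (|mu₁ - mu₁₀| + |mu₂ - mu₂₀|) := by nlinarith

lemma abs_neg_div_one_sub_lt_one (hlam : lam < 1 / 2) : |-lam / (1 - lam)| < 1 := by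
  rw [abs_div, abs_of_pos (by linarith : 0 < 1 - lam), div_lt_one (by linarith), abs_lt]
  constructor <;> linarith

lemma Ainv_sub (hlam : lam < 1 / 2) {H K : ℝ → ℝ} {M N : ℝ} (hH : ∀ x, |H x| ≤ M)
    (hK : ∀ x, |K x| ≤ N) (x : ℝ) :
    Ainv lam mu₁ mu₂ H x - Ainv lam mu₁ mu₂ K x = Ainv lam mu₁ mu₂ (H - K) x := by
  have hr := abs_neg_div_one_sub_lt_one hlam
  rw [Ainv, Ainv, Ainv, ← mul_sub, ← (summable_pow_mul_of_abs_le hr hH _).tsum_sub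
    (summable_pow_mul_of_abs_le hr hK _)]
  simp only [Pi.sub_apply, mul_sub]

lemma Ainv_Amix (hlam : lam < 1 / 2) {F : ℝ → ℝ} {M : ℝ} (hF : ∀ x, |F x| ≤ M) (x : ℝ) :
    Ainv lam mu₁ mu₂ (Amix lam mu₁ mu₂ F) x = F x := by
  set r := -lam / (1 - lam)
  set f : ℕ → ℝ := fun k => r ^ k * F (x + k * (mu₂ - mu₁))
  have hne : 1 - lam ≠ 0 := by linarith
  have hterm : ∀ k : ℕ, 1 / (1 - lam) * (r ^ k * Amix lam mu₁ mu₂ F (x + mu₂ + k * (mu₂ - mu₁)))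
      = f k - f (k + 1) := by
    intro k
    simp only [Amix, f, r, Nat.cast_succ, pow_succ]
    rw [show x + mu₂ + k * (mu₂ - mu₁) - mu₁ = x + (k + 1) * (mu₂ - mu₁) by ring,
      show x + mu₂ + k * (mu₂ - mu₁) - mu₂ = x + k * (mu₂ - mu₁) by ring]
    field_simp
    ring
  rw [Ainv, ← tsum_mul_left, tsum_congr hterm,
    tsum_sub_succ (summable_pow_mul_of_abs_le (abs_neg_div_one_sub_lt_one hlam) hF _)]
  simp

lemma abs_Ainv_le (hlam0 : 0 ≤ lam) (hlam : lam < 1 / 2) {K : ℝ → ℝ} {δ : ℝ}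
    (hK : ∀ x, |K x| ≤ δ) (x : ℝ) : |Ainv lam mu₁ mu₂ K x| ≤ δ / (1 - 2 * lam) := by
  set s := lam / (1 - lam)
  have h1 : 0 < 1 - lam := by linarith
  have hs0 : 0 ≤ s := div_nonneg hlam0 h1.le
  have hs1 : s < 1 := by rw [div_lt_one h1]; linarith
  have hr : |-lam / (1 - lam)| = s := by rw [abs_div, abs_neg, abs_of_nonneg hlam0, abs_of_pos h1]
  have hsum : ‖∑' k : ℕ, (-lam / (1 - lam)) ^ k * K (x + mu₂ + k * (mu₂ - mu₁))‖ ≤ (1 - s)⁻¹ * δ :=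
    tsum_of_norm_bounded ((hasSum_geometric_of_lt_one hs0 hs1).mul_right δ) fun k => by
      rw [Real.norm_eq_abs, abs_mul, abs_pow, hr]
      gcongr
      exact hK _
  have hδ : 0 ≤ δ := (abs_nonneg _).trans (hK 0)
  calc |Ainv lam mu₁ mu₂ K x| ≤ 1 / (1 - lam) * ((1 - s)⁻¹ * δ) := by
        rw [Ainv, abs_mul, abs_of_pos (by positivity), ← Real.norm_eq_abs]
        gcongr
    _ = δ / (1 - 2 * lam) := by
        have : 1 - 2 * lam ≠ 0 := by linarith
        simp only [s]
        field_simp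
        ring

end Mixing

lemma measure_singleton_eq_zero_of_continuous {ν : Measure ℝ} [IsProbabilityMeasure ν]
    {F : ℝ → ℝ} (hF : ∀ x, F x = (ν (Iic x)).toReal) (hcont : Continuous F) (x : ℝ) :
    ν {x} = 0 := by
  have hcdf : ⇑(cdf ν) = F := funext fun y => by rw [cdf_eq_real, measureReal_def, hF]
  rw [← measure_cdf ν, StieltjesFunction.measure_singleton, hcdf,
    hcont.continuousWithinAt.leftLim_eq, sub_self, ENNReal.ofReal_zero]

lemma cdf_add_cdf_neg {ν : Measure ℝ} [IsProbabilityMeasure ν] (hsym : ν.map (fun x => -x) = ν)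
    {F : ℝ → ℝ} (hF : ∀ x, F x = (ν (Iic x)).toReal) (hcont : Continuous F) (x : ℝ) :
    F x + F (-x) = 1 := by
  have hneg : ν (Iic (-x)) = ν (Ici x) := by
    conv_lhs => rw [← hsym]
    rw [Measure.map_apply measurable_neg measurableSet_Iic]
    congr 1
    ext y
    simp
  have hIio : ν.real (Iio x) = ν.real (Iic x) :=
    measureReal_congr (Iio_ae_eq_Iic' (measure_singleton_eq_zero_of_continuous hF hcont x))
  rw [hF, hF, hneg, ← compl_Iio, ← measureReal_def, ← measureReal_def,
    probReal_compl_eq_one_sub measurableSet_Iio, hIio, add_sub_cancel]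

lemma abs_half_add_one_sub_sub_le {p q a b ε : ℝ} (hpq : p + q = 1) (ha : |a - p| ≤ ε)
    (hb : |b - q| ≤ ε) : |1 / 2 * (a + 1 - b) - p| ≤ ε := by
  rw [abs_le] at *
  constructor <;> linarith [ha.1, ha.2, hb.1, hb.2]

theorem stmt_15_general
    (ν : Measure ℝ) (hprob : IsProbabilityMeasure ν) (hsym : ν.map (fun x => -x) = ν)
    (F₀ : ℝ → ℝ) (hF₀ : ∀ x : ℝ, F₀ x = (ν (Set.Iic x)).toReal)
    -- condition C1
    (hlip : ∃ L : NNReal, LipschitzWith L F₀)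
    (d : ℝ) (hd : d ∈ Set.Ioo (0 : ℝ) (1 / 2))
    (lam₀ mu₁₀ mu₂₀ : ℝ)
    (G : ℝ → ℝ) (hG : ∀ x : ℝ, G x = lam₀ * F₀ (x - mu₁₀) + (1 - lam₀) * F₀ (x - mu₂₀)) :
    ∃ c : ℝ, 0 ≤ c ∧
      ∀ lam mu₁ mu₂ : ℝ, lam ∈ Set.Icc (0 : ℝ) (1 / 2 - d) →
        ∀ H : ℝ → ℝ, (∃ M : ℝ, ∀ x : ℝ, |H x| ≤ M) →
          ∀ δ : ℝ, (∀ x : ℝ, |H x - G x| ≤ δ) →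
            ∀ x : ℝ,
              |(1 / 2) * (Ainv lam mu₁ mu₂ H x + 1 - Ainv lam mu₁ mu₂ H (-x)) - F₀ x|
                ≤ (1 / (2 * d)) * δ
                  + c * enorm3 ((lam, mu₁, mu₂) - (lam₀, mu₁₀, mu₂₀)) := by
  obtain ⟨L, hL⟩ := hlip
  obtain ⟨hd0, -⟩ := hd
  have hF01 : ∀ x, F₀ x ∈ Icc 0 1 := fun x => by
    rw [hF₀, ← measureReal_def]; exact ⟨measureReal_nonneg, measureReal_le_one⟩
  have hF₀b : ∀ x, |F₀ x| ≤ 1 := fun x => abs_le.2 ⟨by linarith [(hF01 x).1], (hF01 x).2⟩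
  have hGmix : G = Amix lam₀ mu₁₀ mu₂₀ F₀ := funext hG
  refine ⟨(1 + 2 * L) / (2 * d), by positivity, ?_⟩
  intro lam mu₁ mu₂ ⟨hlam0, hlamd⟩ H ⟨M, hM⟩ δ hδ x
  have hlam : lam < 1 / 2 := by linarith
  set N := enorm3 ((lam, mu₁, mu₂) - (lam₀, mu₁₀, mu₂₀))
  obtain ⟨hNlam, hNmu₁, hNmu₂⟩ := abs_le_enorm3 ((lam, mu₁, mu₂) - (lam₀, mu₁₀, mu₂₀))
  have hbound : ∀ z, |(H - Amix lam mu₁ mu₂ F₀) z| ≤ δ + (1 + 2 * L) * N := fun z =>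
    calc |H z - Amix lam mu₁ mu₂ F₀ z| ≤ |H z - G z| + |G z - Amix lam mu₁ mu₂ F₀ z| :=
          abs_sub_le _ _ _
      _ ≤ δ + (|lam - lam₀| + L * (|mu₁ - mu₁₀| + |mu₂ - mu₂₀|)) :=
          add_le_add (hδ z) (hGmix ▸ abs_Amix_sub_Amix_le hF01 hL ⟨hlam0, by linarith⟩ _ _ _ z)
      _ ≤ δ + (1 + 2 * L) * N := by
          have := L.coe_nonneg
          simp only [Prod.fst_sub, Prod.snd_sub] at hNlam hNmu₁ hNmu₂
          nlinarith
  have hinv : ∀ y, |Ainv lam mu₁ mu₂ H y - F₀ y| ≤ (δ + (1 + 2 * L) * N) / (2 * d) := by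
    intro y
    rw [← Ainv_Amix (mu₁ := mu₁) (mu₂ := mu₂) hlam hF₀b y,
      Ainv_sub hlam hM (abs_Amix_le ⟨hlam0, by linarith⟩ hF₀b)]
    calc _ ≤ (δ + (1 + 2 * L) * N) / (1 - 2 * lam) := abs_Ainv_le hlam0 hlam hbound y
      _ ≤ _ := div_le_div_of_nonneg_left ((abs_nonneg _).trans (hbound 0)) (by positivity)
          (by linarith)
  refine (abs_half_add_one_sub_sub_le (cdf_add_cdf_neg hsym hF₀ hL.continuous x) (hinv x)
    (hinv (-x))).trans_eq ?_
  ring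

/-- Error bound for the symmetrized inversion estimate
`F̂ = (1/2)(I + S_r)(A_θ⁻¹ H)` of the symmetric component `F₀`. -/
theorem stmt_15
    (ν : Measure ℝ) (hprob : IsProbabilityMeasure ν) (hsym : ν.map (fun x => -x) = ν)
    (F₀ : ℝ → ℝ) (hF₀ : ∀ x : ℝ, F₀ x = (ν (Set.Iic x)).toReal)
    -- condition C1
    (hmono : StrictMono F₀) (hlip : ∃ L : NNReal, LipschitzWith L F₀)
    (d : ℝ) (hd : d ∈ Set.Ioo (0 : ℝ) (1 / 2))
    (lam₀ mu₁₀ mu₂₀ : ℝ) (hlam₀ : lam₀ ∈ Set.Icc (0 : ℝ) (1 / 2 - d)) (hmu₀ : mu₁₀ ≠ mu₂₀)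
    (G : ℝ → ℝ) (hG : ∀ x : ℝ, G x = lam₀ * F₀ (x - mu₁₀) + (1 - lam₀) * F₀ (x - mu₂₀)) :
    ∃ c : ℝ, 0 ≤ c ∧
      ∀ lam mu₁ mu₂ : ℝ, lam ∈ Set.Icc (0 : ℝ) (1 / 2 - d) →
        ∀ H : ℝ → ℝ, (∃ M : ℝ, ∀ x : ℝ, |H x| ≤ M) →
          ∀ δ : ℝ, (∀ x : ℝ, |H x - G x| ≤ δ) →
            ∀ x : ℝ,
              |(1 / 2) * (Ainv lam mu₁ mu₂ H x + 1 - Ainv lam mu₁ mu₂ H (-x)) - F₀ x|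
                ≤ (1 / (2 * d)) * δ
                  + c * enorm3 ((lam, mu₁, mu₂) - (lam₀, mu₁₀, mu₂₀)) :=
  stmt_15_general ν hprob hsym F₀ hF₀ hlip d hd lam₀ mu₁₀ mu₂₀ G hG
end
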